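/- arXiv:2302.09571 — 7 statements merged into one kernel-verified Lean document; each statement's English description precedes it below -/
import Mathlib

section
/- Let (X, τ) be a compact topological space, (Y, d) a pseudometric space, and F a family of continuous maps f : X → Y which is bounded in the sense that sup_{f ∈ F} diam_d(f(X)) < ∞. Then the following are equivalent: (1) F is a fragmented family on X; (2) every countable subfamily K ⊆ F is a fragmented family on X; (3) for every countable subfamily K ⊆ F the pseudometric space (X, ρ_{K,d}) is separable, where ρ_{K,d}(x₁, x₂) := sup_{f ∈ K} d(f(x₁), f(x₂)). -/
/-- A family `F` of maps from a topological space `X` to a pseudometric space `Y`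
is a *fragmented family* if for every nonempty `A ⊆ X` and every `ε > 0` there is
an open `O ⊆ X` with `O ∩ A ≠ ∅` such that `f (O ∩ A)` is `ε`-small for all `f ∈ F`. -/
def IsFragmentedFamily {X Y : Type*} [TopologicalSpace X] [PseudoMetricSpace Y]
    (F : Set (X → Y)) : Prop :=
  ∀ A : Set X, A.Nonempty → ∀ ε : ℝ, 0 < ε → ∃ O : Set X, IsOpen O ∧ (O ∩ A).Nonempty ∧
    ∀ f ∈ F, ∀ x ∈ O ∩ A, ∀ y ∈ O ∩ A, dist (f x) (f y) ≤ ε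


/-!
(2) ⇒ (3): a countable family `K` of continuous maps factors, up to distance zero, through
`Φ : X → (K → Y)`, `Φ x = (f x)_{f ∈ K}`, whose range is compact and pseudometrizable. A
minimal-closed-set argument shows that `K` stays fragmented for the second countable topology
induced by `Φ`, and for such a topology every set that is `c`-separated by `K` is countable, so
maximal `1 / (n + 1)`-separated sets form a countable `ρ_K`-dense set.

(3) ⇒ (1): if `F` is not fragmented, `A` and `ε` witness this on every open set; splitting open
sets along two far-apart values of a map of `F` yields a binary tree using countably many maps.
By compactness every branch has a point in the closures of all its nodes, and these continuum
many points are `ε / 2`-separated by those countably many maps, so `ρ_K` is not separable.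
-/
section

open Set Topology Metric TopologicalSpace

variable {X Y : Type*} [PseudoMetricSpace Y]

/-- Separability of `(X, ρ_K)` with `ρ_K x y = ⨆ f ∈ K, dist (f x) (f y)`, phrased without the
supremum, which may be infinite. -/
def IsSupSeparable (K : Set (X → Y)) : Prop :=
  ∃ D : Set X, D.Countable ∧ ∀ x : X, ∀ ε : ℝ, 0 < ε → ∃ y ∈ D, ∀ f ∈ K, dist (f x) (f y) ≤ ε

def IsSeparatedBy (F : Set (X → Y)) (c : ℝ) (S : Set X) : Prop :=
  S.Pairwise fun x y => ∃ f ∈ F, c < dist (f x) (f y)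

section Separated

variable {F : Set (X → Y)} {c : ℝ} {S : Set X}

theorem IsSupSeparable.countable_of_isSeparatedBy (hF : IsSupSeparable F) (hc : 0 < c)
    (hS : IsSeparatedBy F c S) : S.Countable := by
  obtain ⟨D, hD, hdense⟩ := hF
  choose y hyD hy using fun x => hdense x (c / 3) (by positivity)
  refine MapsTo.countable_of_injOn (fun x _ => hyD x) (fun x hx x' hx' hxx' => ?_) hD
  by_contra hne
  obtain ⟨f, hf, hlt⟩ := hS hx hx' hne
  have h₁ := hy x f hf
  have h₂ := hy x' f hf
  rw [← hxx'] at h₂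
  linarith [dist_triangle_right (f x) (f x') (f (y x))]

theorem isSupSeparable_of_forall_isSeparatedBy
    (h : ∀ c > 0, ∀ S : Set X, IsSeparatedBy F c S → S.Countable) : IsSupSeparable F := by
  have hmax (n : ℕ) : ∃ S, Maximal (IsSeparatedBy F (1 / (n + 1))) S := by
    obtain ⟨S, -, hS⟩ := zorn_subset_nonempty {S | IsSeparatedBy F (1 / (n + 1)) S}
      (fun C hC hchain _ => ⟨⋃₀ C, (pairwise_sUnion hchain.directedOn).2 hC,
        fun _ => subset_sUnion_of_mem⟩) ∅ (pairwise_empty _)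
    exact ⟨S, hS⟩
  choose S hS using hmax
  refine ⟨⋃ n, S n, countable_iUnion fun n => h _ (by positivity) _ (hS n).prop,
    fun x ε hε => ?_⟩
  obtain ⟨n, hn⟩ := exists_nat_one_div_lt hε
  by_contra! hfar
  have hfar' : ∀ y ∈ S n, ∃ f ∈ F, 1 / (n + 1 : ℝ) < dist (f x) (f y) := fun y hy =>
    (hfar y (mem_iUnion.2 ⟨n, hy⟩)).imp fun f ⟨hf, hlt⟩ => ⟨hf, hn.trans hlt⟩
  have hxS : x ∉ S n := fun hx => by
    obtain ⟨f, -, hlt⟩ := hfar' x hx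
    simp only [dist_self] at hlt
    linarith [show (0 : ℝ) < 1 / (n + 1) by positivity]
  exact hxS <| (hS n).mem_of_prop_insert <|
    pairwise_insert.2 ⟨(hS n).prop, fun y hy _ =>
      let ⟨f, hf, hlt⟩ := hfar' y hy; ⟨⟨f, hf, hlt⟩, f, hf, dist_comm (f x) (f y) ▸ hlt⟩⟩

end Separated

theorem IsFragmentedFamily.mono [TopologicalSpace X] {F K : Set (X → Y)}
    (hF : IsFragmentedFamily F) (hKF : K ⊆ F) : IsFragmentedFamily K := fun A hA ε hε =>
  (hF A hA ε hε).imp fun _ ⟨hO, hne, hsmall⟩ => ⟨hO, hne, fun f hf => hsmall f (hKF hf)⟩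

section SecondCountable

variable [TopologicalSpace X] [SecondCountableTopology X] {F : Set (X → Y)}

/-- A fragmented family on a second countable space has countable separated sets: the points of
`S` that have a basic neighbourhood meeting `S` in a countable set are countably many, and
fragmenting the remaining ones isolates one of them inside such a neighbourhood. -/
theorem IsFragmentedFamily.countable_of_isSeparatedBy (hF : IsFragmentedFamily F) {c : ℝ}
    (hc : 0 < c) {S : Set X} (hS : IsSeparatedBy F c S) : S.Countable := by
  obtain ⟨b, hbc, -, hb⟩ := exists_countable_basis X
  set S₀ := {s ∈ S | ∃ U ∈ b, s ∈ U ∧ (S ∩ U).Countable}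
  have hS₀ : S₀.Countable := by
    refine ((hbc.mono (sep_subset b fun U => (S ∩ U).Countable)).biUnion
      fun U hU => hU.2).mono ?_
    rintro s ⟨hs, U, hUb, hsU, hU⟩
    exact mem_biUnion ⟨hUb, hU⟩ ⟨hs, hsU⟩
  refine hS₀.mono fun s hs => ?_
  by_contra hs₀
  obtain ⟨O, hO, ⟨a, haO, haS, ha₀⟩, hsmall⟩ := hF (S \ S₀) ⟨s, hs, hs₀⟩ c hc
  obtain ⟨U, hUb, haU, hUO⟩ := hb.exists_subset_of_mem_open haO hO
  refine ha₀ ⟨haS, U, hUb, haU, (hS₀.insert a).mono fun x ⟨hxS, hxU⟩ => ?_⟩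
  by_cases hx₀ : x ∈ S₀
  · exact mem_insert_of_mem a hx₀
  by_contra hxa
  obtain ⟨f, hf, hlt⟩ := hS hxS haS (ne_of_mem_of_not_mem (mem_insert a S₀) hxa).symm
  exact hlt.not_ge (hsmall f hf x ⟨hUO hxU, hxS, hx₀⟩ a ⟨haO, haS, ha₀⟩)

theorem IsFragmentedFamily.isSupSeparable (hF : IsFragmentedFamily F) : IsSupSeparable F :=
  isSupSeparable_of_forall_isSeparatedBy fun _ hc _ => hF.countable_of_isSeparatedBy hc

end SecondCountable

section Induced

variable [TopologicalSpace X] [CompactSpace X] {Z : Type*} [TopologicalSpace Z] [R1Space Z]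
  {Φ : X → Z}

theorem exists_minimal_isClosed_forall_exists_inseparable (hΦ : Continuous Φ) (A : Set X) :
    ∃ B, Minimal (fun B => IsClosed B ∧ ∀ a ∈ A, ∃ b ∈ B, Inseparable (Φ a) (Φ b)) B := by
  set 𝒞 := {B | IsClosed B ∧ ∀ a ∈ A, ∃ b ∈ B, Inseparable (Φ a) (Φ b)}
  have hchain : ∀ C ⊆ 𝒞, IsChain (· ⊆ ·) C → C.Nonempty → ∃ B ∈ 𝒞, ∀ B' ∈ C, B ⊆ B' := by
    rintro C hC hchain ⟨B₀, hB₀⟩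
    refine ⟨⋂₀ C, ⟨isClosed_sInter fun B hB => (hC hB).1, fun a ha => ?_⟩,
      fun _ => sInter_subset_of_mem⟩
    have hE : IsClosed {x | Inseparable (Φ a) (Φ x)} :=
      isClosed_setOfPred_inseparable.preimage (continuous_const.prodMk hΦ)
    have : Nonempty C := ⟨⟨B₀, hB₀⟩⟩
    obtain ⟨b, hb⟩ := IsCompact.nonempty_iInter_of_directed_nonempty_isCompact_isClosed
      (fun B : C => (B : Set X) ∩ {x | Inseparable (Φ a) (Φ x)})
      (fun B₁ B₂ => (hchain.total B₁.2 B₂.2).elim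
        (fun h => ⟨B₁, subset_rfl, inter_subset_inter_left _ h⟩)
        (fun h => ⟨B₂, inter_subset_inter_left _ h, subset_rfl⟩))
      (fun B => (hC B.2).2 a ha) (fun B => ((hC B.2).1.inter hE).isCompact)
      (fun B => (hC B.2).1.inter hE)
    simp only [mem_iInter] at hb
    exact ⟨b, fun B hB => (hb ⟨B, hB⟩).1, (hb ⟨B₀, hB₀⟩).2⟩
  obtain ⟨B, -, hB⟩ := zorn_superset_nonempty 𝒞 hchain univ
    ⟨isClosed_univ, fun a _ => ⟨a, mem_univ a, .rfl⟩⟩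
  exact ⟨B, hB⟩

/-- To fragment `A`, fragment a minimal closed set `B` meeting the `Φ`-fibre class of every
point of `A`: by minimality, some `a₀ ∈ A` has its class outside `B \ O`, and the complement of
the closure of the compact set `Φ '' (B \ O)` is the required neighbourhood of `Φ a₀`. -/
theorem IsFragmentedFamily.induced (hΦ : Continuous Φ) {F : Set (X → Y)}
    (hF : IsFragmentedFamily F)
    (hFΦ : ∀ f ∈ F, ∀ x y, Inseparable (Φ x) (Φ y) → dist (f x) (f y) = 0) :
    @IsFragmentedFamily X Y (.induced Φ ‹_›) _ F := by
  intro A hA ε hε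
  obtain ⟨B, ⟨hBc, hBA⟩, hBmin⟩ := exists_minimal_isClosed_forall_exists_inseparable hΦ A
  obtain ⟨O, hO, hOB, hsmall⟩ := hF B (hA.elim fun a ha => (hBA a ha).elim fun b hb => ⟨b, hb.1⟩)
    ε hε
  obtain ⟨a₀, ha₀, hfar⟩ : ∃ a₀ ∈ A, ∀ b ∈ B \ O, ¬Inseparable (Φ a₀) (Φ b) := by
    by_contra! h
    obtain ⟨x, hxO, hxB⟩ := hOB
    exact (hBmin ⟨hBc.sdiff hO, h⟩ sdiff_subset hxB).2 hxO
  set W := (closure (Φ '' (B \ O)))ᶜ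
  have hW : Φ a₀ ∈ W := by
    rw [mem_compl_iff, ((hBc.sdiff hO).isCompact.image hΦ).closure_eq_biUnion_inseparable]
    simp only [mem_iUnion, mem_ofPred_eq, not_exists, forall_mem_image]
    exact fun b hb h => hfar b hb h.symm
  have hnear : ∀ x ∈ Φ ⁻¹' W ∩ A, ∃ b ∈ O ∩ B, ∀ f ∈ F, dist (f x) (f b) = 0 := by
    rintro x ⟨hxW, hxA⟩
    obtain ⟨b, hbB, hxb⟩ := hBA x hxA
    refine ⟨b, ⟨?_, hbB⟩, fun f hf => hFΦ f hf x b hxb⟩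
    by_contra hbO
    exact hxW ((hxb.mem_closed_iff isClosed_closure).2 (subset_closure ⟨b, ⟨hbB, hbO⟩, rfl⟩))
  refine ⟨Φ ⁻¹' W, ⟨W, isClosed_closure.isOpen_compl, rfl⟩, ⟨a₀, hW, ha₀⟩, ?_⟩
  intro f hf x hx y hy
  obtain ⟨bx, hbx, hxbx⟩ := hnear x hx
  obtain ⟨bY, hby, hyby⟩ := hnear y hy
  calc dist (f x) (f y) ≤ dist (f x) (f bx) + dist (f bx) (f bY) + dist (f bY) (f y) :=
        dist_triangle4 _ _ _ _
    _ ≤ 0 + ε + 0 := by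
        gcongr
        · exact (hxbx f hf).le
        · exact hsmall f hf bx hbx bY hby
        · exact (dist_comm (f bY) (f y) ▸ hyby f hf).le
    _ = ε := by ring

end Induced

theorem IsFragmentedFamily.isSupSeparable_of_countable [TopologicalSpace X] [CompactSpace X]
    {K : Set (X → Y)} (hK : K.Countable) (hcont : ∀ f ∈ K, Continuous f)
    (hF : IsFragmentedFamily K) : IsSupSeparable K := by
  have := hK.to_subtype
  let Ψ : X → (K → Y) := fun x f => f.1 x
  have hΨ : Continuous Ψ := continuous_pi fun f => hcont f.1 f.2
  have : CompactSpace (range Ψ) := isCompact_iff_compactSpace.mp (isCompact_range hΨ)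
  -- `range Ψ` is compact and pseudometrizable, hence second countable
  have := secondCountableTopology_induced X (range Ψ) (rangeFactorization Ψ)
  refine @IsFragmentedFamily.isSupSeparable X Y _ (.induced _ _) this K
    (hF.induced hΨ.rangeFactorization fun f hf x y hxy => ?_)
  exact Metric.inseparable_iff.mp
    ((hxy.map continuous_subtype_val).map (continuous_apply (⟨f, hf⟩ : K)))

def branchPrefix (σ : ℕ → Bool) : ℕ → List Bool
  | 0 => []
  | n + 1 => σ n :: branchPrefix σ n

theorem branchPrefix_eq_of_forall_lt {σ τ : ℕ → Bool} :
    ∀ {n : ℕ}, (∀ i < n, σ i = τ i) → branchPrefix σ n = branchPrefix τ n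
  | 0, _ => rfl
  | n + 1, h => by
    rw [branchPrefix, branchPrefix, h n n.lt_succ_self,
      branchPrefix_eq_of_forall_lt fun i hi => h i (hi.trans n.lt_succ_self)]

theorem not_countable_nat_to_bool : ¬Countable (ℕ → Bool) := by
  rw [← Cardinal.mk_le_aleph0_iff, not_le]
  simpa using Cardinal.cantor Cardinal.aleph0

/-- Nodes are indexed by finite words read latest letter first, as in `branchPrefix`. -/
structure SeparatingCantorScheme [TopologicalSpace X] (F : Set (X → Y)) (c : ℝ) where
  node : List Bool → Set X
  fn : List Bool → X → Y
  fn_mem (l : List Bool) : fn l ∈ F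
  node_nonempty (l : List Bool) : (node l).Nonempty
  node_cons_subset (b : Bool) (l : List Bool) : node (b :: l) ⊆ node l
  lt_dist (l : List Bool) : ∀ x ∈ closure (node (false :: l)), ∀ y ∈ closure (node (true :: l)),
    c < dist (fn l x) (fn l y)

namespace SeparatingCantorScheme

variable [TopologicalSpace X] [CompactSpace X] {F : Set (X → Y)} {c : ℝ}
  (T : SeparatingCantorScheme F c)

theorem exists_forall_mem_closure_node (σ : ℕ → Bool) :
    ∃ x, ∀ n, x ∈ closure (T.node (branchPrefix σ n)) := by
  obtain ⟨x, hx⟩ := IsCompact.nonempty_iInter_of_sequence_nonempty_isCompact_isClosed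
    (fun n => closure (T.node (branchPrefix σ n)))
    (fun n => closure_mono (T.node_cons_subset _ _)) (fun n => (T.node_nonempty _).closure)
    isClosed_closure.isCompact (fun _ => isClosed_closure)
  exact ⟨x, mem_iInter.mp hx⟩

theorem exists_isSeparatedBy_not_countable (hc : 0 ≤ c) :
    ∃ S : Set X, IsSeparatedBy (range T.fn) c S ∧ ¬S.Countable := by
  choose p hp using T.exists_forall_mem_closure_node
  have hsep : ∀ σ τ, σ ≠ τ → ∃ f ∈ range T.fn, c < dist (f (p σ)) (f (p τ)) := by
    intro σ τ hστ
    have hex : ∃ k, σ k ≠ τ k := by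
      by_contra! h
      exact hστ (funext h)
    set k := Nat.find hex
    have hprefix : branchPrefix σ k = branchPrefix τ k :=
      branchPrefix_eq_of_forall_lt fun i hi => not_not.mp (Nat.find_min hex hi)
    have hσ := hp σ (k + 1)
    have hτ := hp τ (k + 1)
    rw [branchPrefix, hprefix] at hσ
    rw [branchPrefix] at hτ
    refine ⟨_, mem_range_self (branchPrefix τ k), ?_⟩
    cases hσk : σ k <;> cases hτk : τ k <;> rw [hσk] at hσ <;> rw [hτk] at hτ
    · exact absurd (hσk.trans hτk.symm) (Nat.find_spec hex)
    · exact T.lt_dist _ _ hσ _ hτ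
    · exact dist_comm (T.fn _ (p σ)) _ ▸ T.lt_dist _ _ hτ _ hσ
    · exact absurd (hσk.trans hτk.symm) (Nat.find_spec hex)
  have hinj : Function.Injective p := fun σ τ hpστ => by
    by_contra hστ
    obtain ⟨f, -, hlt⟩ := hsep σ τ hστ
    rw [hpστ, dist_self] at hlt
    exact hlt.not_ge hc
  refine ⟨range p, ?_, fun hcount => not_countable_nat_to_bool ?_⟩
  · rintro _ ⟨σ, rfl⟩ _ ⟨τ, rfl⟩ hne
    exact hsep σ τ fun h => hne (h ▸ rfl)
  · have := hcount.to_subtype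
    exact (rangeFactorization_injective.mpr hinj).countable

end SeparatingCantorScheme

/-- The children of a node `O` are the parts of `O` where `f` is `ε / 4`-close to `f x`, resp.
`f y`, for some `f ∈ F` and `x, y ∈ O ∩ A` with `ε < dist (f x) (f y)`. -/
theorem nonempty_separatingCantorScheme_of_not_isFragmentedFamily [TopologicalSpace X]
    {F : Set (X → Y)} (hcont : ∀ f ∈ F, Continuous f) (hF : ¬IsFragmentedFamily F) :
    ∃ c > 0, Nonempty (SeparatingCantorScheme F c) := by
  simp only [IsFragmentedFamily, not_forall, not_exists, not_and, not_le] at hF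
  obtain ⟨A, hA, ε, hε, hbad⟩ := hF
  let Node := {O : Set X // IsOpen O ∧ (O ∩ A).Nonempty}
  choose f hfF x hx y hy hxy using fun O : Node => hbad O.1 O.2.1 O.2.2
  let child (O : Node) (b : Bool) : Node :=
    ⟨O.1 ∩ f O ⁻¹' ball (f O (cond b (y O) (x O))) (ε / 4),
      O.2.1.inter (isOpen_ball.preimage (hcont _ (hfF O))), by
        cases b
        · exact ⟨x O, ⟨(hx O).1, mem_ball_self (by positivity)⟩, (hx O).2⟩
        · exact ⟨y O, ⟨(hy O).1, mem_ball_self (by positivity)⟩, (hy O).2⟩⟩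
  have hclosure (O : Node) (b : Bool) :
      closure (child O b).1 ⊆ f O ⁻¹' closedBall (f O (cond b (y O) (x O))) (ε / 4) :=
    closure_minimal (fun z hz => ball_subset_closedBall hz.2)
      (isClosed_closedBall.preimage (hcont _ (hfF O)))
  let node (l : List Bool) : Node :=
    l.foldr (fun b O => child O b) ⟨univ, isOpen_univ, by rwa [univ_inter]⟩
  refine ⟨ε / 2, by positivity, ⟨
    { node l := (node l).1
      fn l := f (node l)
      fn_mem l := hfF (node l)
      node_nonempty l := (node l).2.2.mono inter_subset_left
      node_cons_subset _ _ := inter_subset_left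
      lt_dist l x' hx' y' hy' := ?_ }⟩⟩
  have h₁ := hclosure (node l) false hx'
  have h₂ := hclosure (node l) true hy'
  simp only [cond_false, cond_true, mem_preimage, mem_closedBall] at h₁ h₂
  rw [dist_comm] at h₁
  linarith [hxy (node l), dist_triangle4 (f (node l) (x (node l))) (f (node l) x')
    (f (node l) y') (f (node l) (y (node l)))]

theorem isFragmentedFamily_of_forall_isSupSeparable [TopologicalSpace X] [CompactSpace X]
    {F : Set (X → Y)} (hcont : ∀ f ∈ F, Continuous f)
    (hsep : ∀ K ⊆ F, K.Countable → IsSupSeparable K) : IsFragmentedFamily F := by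
  by_contra hF
  obtain ⟨c, hc, ⟨T⟩⟩ := nonempty_separatingCantorScheme_of_not_isFragmentedFamily hcont hF
  obtain ⟨S, hS, hSc⟩ := T.exists_isSeparatedBy_not_countable hc.le
  exact hSc ((hsep _ (range_subset_iff.2 T.fn_mem) (countable_range _)).countable_of_isSeparatedBy
    hc hS)

end

theorem stmt0_general {X Y : Type*} [TopologicalSpace X] [CompactSpace X] [PseudoMetricSpace Y]
    (F : Set (X → Y)) (hcont : ∀ f ∈ F, Continuous f) :
    List.TFAE [
      -- (1) `F` is a fragmented family on `X`
      IsFragmentedFamily F,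
      -- (2) every countable subfamily of `F` is a fragmented family on `X`
      ∀ K ⊆ F, K.Countable → IsFragmentedFamily K,
      -- (3) for every countable subfamily `K ⊆ F` the pseudometric space
      -- `(X, ρ_{K,d})`, with `ρ_{K,d}(x₁,x₂) = sup_{f ∈ K} d (f x₁) (f x₂)`, is separable
      ∀ K ⊆ F, K.Countable → ∃ D : Set X, D.Countable ∧
        ∀ x : X, ∀ ε : ℝ, 0 < ε → ∃ y ∈ D, ∀ f ∈ K, dist (f x) (f y) ≤ ε] := by
  tfae_have 1 → 2 := fun hF K hKF _ => hF.mono hKF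
  tfae_have 2 → 3 := fun h K hKF hK =>
    (h K hKF hK).isSupSeparable_of_countable hK fun f hf => hcont f (hKF hf)
  tfae_have 3 → 1 := isFragmentedFamily_of_forall_isSupSeparable hcont
  tfae_finish

theorem stmt0 {X Y : Type*} [TopologicalSpace X] [CompactSpace X] [PseudoMetricSpace Y]
    (F : Set (X → Y)) (hcont : ∀ f ∈ F, Continuous f)
    (hbdd : ∃ C : ℝ, ∀ f ∈ F, ∀ x y : X, dist (f x) (f y) ≤ C) :
    List.TFAE [
      -- (1) `F` is a fragmented family on `X`
      IsFragmentedFamily F,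
      -- (2) every countable subfamily of `F` is a fragmented family on `X`
      ∀ K ⊆ F, K.Countable → IsFragmentedFamily K,
      -- (3) for every countable subfamily `K ⊆ F` the pseudometric space
      -- `(X, ρ_{K,d})`, with `ρ_{K,d}(x₁,x₂) = sup_{f ∈ K} d (f x₁) (f x₂)`, is separable
      ∀ K ⊆ F, K.Countable → ∃ D : Set X, D.Countable ∧
        ∀ x : X, ∀ ε : ℝ, 0 < ε → ∃ y ∈ D, ∀ f ∈ K, dist (f x) (f y) ≤ ε] :=
  stmt0_general F hcont
end

section
/- Let F be a family of continuous maps from a compact topological space (X, τ) into a uniform space (Y, μ). Then F is a fragmented family if and only if every countable subfamily of F is a fragmented family. -/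
/-- A family `F` of maps from a topological space `X` to a uniform space `Y`
is a *fragmented family* if for every nonempty `A ⊆ X` and every entourage `ε`
there is an open `O ⊆ X` with `O ∩ A ≠ ∅` such that `f (O ∩ A)` is `ε`-small
for every `f ∈ F`. -/
def IsFragmentedFamilyUniform {X Y : Type*} [TopologicalSpace X] [UniformSpace Y]
    (F : Set (X → Y)) : Prop :=
  ∀ A : Set X, A.Nonempty → ∀ ε ∈ uniformity Y, ∃ O : Set X, IsOpen O ∧ (O ∩ A).Nonempty ∧
    ∀ f ∈ F, ∀ x ∈ O ∩ A, ∀ y ∈ O ∩ A, (f x, f y) ∈ ε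

theorem stmt1 {X Y : Type*} [TopologicalSpace X] [CompactSpace X] [UniformSpace Y]
    (F : Set (X → Y)) (hcont : ∀ f ∈ F, Continuous f) :
    IsFragmentedFamilyUniform F ↔
      ∀ K ⊆ F, K.Countable → IsFragmentedFamilyUniform K := by
  constructor
  · intro hF K hKF _hKc A hA ε hε
    obtain ⟨O, hO, hOA, h⟩ := hF A hA ε hε
    exact ⟨O, hO, hOA, fun f hf => h f (hKF hf)⟩
  · intro hcnt A₀ hA₀ne ε hε
    by_contra hcon
    push_neg at hcon
    -- pass to the closure of A₀
    set A' : Set X := closure A₀ with hA'def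
    have hA'ne : A'.Nonempty := hA₀ne.closure
    have hbad : ∀ O : Set X, IsOpen O → (O ∩ A').Nonempty →
        ∃ f ∈ F, ∃ x ∈ O ∩ A', ∃ y ∈ O ∩ A', (f x, f y) ∉ ε := by
      rintro O hO ⟨z, hzO, hzA'⟩
      have hOA₀ : (O ∩ A₀).Nonempty := mem_closure_iff.mp hzA' O hO hzO
      obtain ⟨f, hf, x, hx, y, hy, hxy⟩ := hcon O hO hOA₀
      exact ⟨f, hf, x, ⟨hx.1, subset_closure hx.2⟩, y, ⟨hy.1, subset_closure hy.2⟩, hxy⟩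
    -- entourage arithmetic
    obtain ⟨ε₁, hε₁, hε₁c⟩ := comp_mem_uniformity_sets hε
    obtain ⟨ε₂, hε₂, hε₂c⟩ := comp_mem_uniformity_sets hε₁
    obtain ⟨ε₃, hε₃, hε₃c⟩ := comp_mem_uniformity_sets hε₂
    set η : Set (Y × Y) := ε₃ ∩ Prod.swap ⁻¹' ε₃ with hηdef
    have hη : η ∈ uniformity Y := Filter.inter_mem hε₃ (tendsto_swap_uniformity hε₃)
    have hηsymm : ∀ {a b : Y}, (a, b) ∈ η → (b, a) ∈ η := fun h => ⟨h.2, h.1⟩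
    have hchain : ∀ {a b c d e g : Y}, (a, b) ∈ η → (b, c) ∈ η → (c, d) ∈ η →
        (d, e) ∈ η → (e, g) ∈ η → (a, g) ∈ ε := by
      intro a b c d e g h1 h2 h3 h4 h5
      have hac : (a, c) ∈ ε₂ := hε₃c ⟨b, h1.1, h2.1⟩
      have hce : (c, e) ∈ ε₂ := hε₃c ⟨d, h3.1, h4.1⟩
      have hae : (a, e) ∈ ε₁ := hε₂c ⟨c, hac, hce⟩
      have heg2 : (e, g) ∈ ε₂ := hε₃c ⟨g, h5.1, refl_mem_uniformity hε₃⟩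
      have heg1 : (e, g) ∈ ε₁ := hε₂c ⟨g, heg2, refl_mem_uniformity hε₂⟩
      exact hε₁c ⟨e, hae, heg1⟩
    -- the splitting step
    have step : ∀ V : Set X, IsOpen V → (V ∩ A').Nonempty →
        ∃ f ∈ F, ∃ V₀ V₁ : Set X, (IsOpen V₀ ∧ IsOpen V₁) ∧ (V₀ ⊆ V ∧ V₁ ⊆ V) ∧
          ((V₀ ∩ A').Nonempty ∧ (V₁ ∩ A').Nonempty) ∧
          ∀ p ∈ closure (V₀ ∩ A'), ∀ q ∈ closure (V₁ ∩ A'), (f p, f q) ∉ η := by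
      intro V hV hVA
      obtain ⟨f, hfF, x, hx, y, hy, hxy⟩ := hbad V hV hVA
      have hfc := hcont f hfF
      have hUx : f ⁻¹' {y' | (f x, y') ∈ η} ∈ nhds x :=
        hfc.continuousAt.preimage_mem_nhds (mem_nhds_left (f x) hη)
      obtain ⟨U₀, hU₀sub, hU₀open, hxU₀⟩ := mem_nhds_iff.mp hUx
      have hUy : f ⁻¹' {y' | (f y, y') ∈ η} ∈ nhds y :=
        hfc.continuousAt.preimage_mem_nhds (mem_nhds_left (f y) hη)
      obtain ⟨U₁, hU₁sub, hU₁open, hyU₁⟩ := mem_nhds_iff.mp hUy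
      refine ⟨f, hfF, U₀ ∩ V, U₁ ∩ V, ⟨hU₀open.inter hV, hU₁open.inter hV⟩,
        ⟨Set.inter_subset_right, Set.inter_subset_right⟩,
        ⟨⟨x, ⟨hxU₀, hx.1⟩, hx.2⟩, ⟨y, ⟨hyU₁, hy.1⟩, hy.2⟩⟩, ?_⟩
      intro p hp q hq hpq
      have hWp : f ⁻¹' {y' | (f p, y') ∈ η} ∈ nhds p :=
        hfc.continuousAt.preimage_mem_nhds (mem_nhds_left (f p) hη)
      obtain ⟨u, huW, huS⟩ := mem_closure_iff_nhds.mp hp _ hWp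
      have hWq : f ⁻¹' {y' | (f q, y') ∈ η} ∈ nhds q :=
        hfc.continuousAt.preimage_mem_nhds (mem_nhds_left (f q) hη)
      obtain ⟨v, hvW, hvS⟩ := mem_closure_iff_nhds.mp hq _ hWq
      have h1 : (f x, f u) ∈ η := hU₀sub huS.1.1
      have h2 : (f u, f p) ∈ η := hηsymm huW
      have h4 : (f q, f v) ∈ η := hvW
      have h5 : (f v, f y) ∈ η := hηsymm (hU₁sub hvS.1.1)
      exact hxy (hchain h1 h2 hpq h4 h5)
    -- packaged step on the subtype of admissible open sets
    have hstep' : ∀ V : {V : Set X // IsOpen V ∧ (V ∩ A').Nonempty},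
        ∃ d : (X → Y) × {W : Set X // IsOpen W ∧ (W ∩ A').Nonempty} ×
            {W : Set X // IsOpen W ∧ (W ∩ A').Nonempty},
          d.1 ∈ F ∧ d.2.1.1 ⊆ V.1 ∧ d.2.2.1 ⊆ V.1 ∧
            ∀ p ∈ closure (d.2.1.1 ∩ A'), ∀ q ∈ closure (d.2.2.1 ∩ A'),
              (d.1 p, d.1 q) ∉ η := by
      rintro ⟨V, hVo, hVne⟩
      obtain ⟨f, hfF, V₀, V₁, ⟨ho₀, ho₁⟩, ⟨hs₀, hs₁⟩, ⟨hn₀, hn₁⟩, hsep⟩ := step V hVo hVne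
      exact ⟨⟨f, ⟨V₀, ho₀, hn₀⟩, ⟨V₁, ho₁, hn₁⟩⟩, hfF, hs₀, hs₁, hsep⟩
    choose ext hextF hext0 hext1 hextsep using hstep'
    -- the tree of open sets, indexed by lists of booleans (most recent choice first)
    let node : List Bool → {V : Set X // IsOpen V ∧ (V ∩ A').Nonempty} :=
      fun s => List.rec ⟨Set.univ, isOpen_univ, by simpa using hA'ne⟩
        (fun i _ ih => bif i then (ext ih).2.2 else (ext ih).2.1) s
    let fn : List Bool → X → Y := fun s => (ext (node s)).1
    have hnode_cons : ∀ (i : Bool) (s : List Bool),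
        node (i :: s) = (bif i then (ext (node s)).2.2 else (ext (node s)).2.1) :=
      fun i s => rfl
    let Cl : List Bool → Set X := fun s => closure ((node s).1 ∩ A')
    have hCl_ne : ∀ s, ((node s).1 ∩ A').Nonempty := fun s => (node s).2.2
    have hCl_mono : ∀ (i : Bool) (s : List Bool), Cl (i :: s) ⊆ Cl s := by
      intro i s
      have hsub : (node (i :: s)).1 ⊆ (node s).1 := by
        rw [hnode_cons]
        cases i
        · exact hext0 (node s)
        · exact hext1 (node s)
      exact closure_mono (Set.inter_subset_inter_left _ hsub)
    have hsep' : ∀ s : List Bool, ∀ p ∈ Cl (false :: s), ∀ q ∈ Cl (true :: s),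
        (fn s p, fn s q) ∉ η := by
      intro s p hp q hq
      exact hextsep (node s) p hp q hq
    -- branches
    let br : (ℕ → Bool) → ℕ → List Bool :=
      fun c n => Nat.rec [] (fun m ih => c m :: ih) n
    have hbr_succ : ∀ (c : ℕ → Bool) (n : ℕ), br c (n + 1) = c n :: br c n := fun _ _ => rfl
    have hbr_eq : ∀ (b c : ℕ → Bool) (n : ℕ), (∀ k < n, b k = c k) → br b n = br c n := by
      intro b c n
      induction n with
      | zero => intro _; rfl
      | succ m ih =>
        intro h
        rw [hbr_succ, hbr_succ, h m (Nat.lt_succ_self m),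
          ih (fun k hk => h k (hk.trans (Nat.lt_succ_self m)))]
    let Fib : (ℕ → Bool) → Set X := fun c => ⋂ n, Cl (br c n)
    -- intersecting a closed set with a fiber
    have hInter : ∀ (c : ℕ → Bool) (C : Set X), IsClosed C →
        (∀ n, (C ∩ Cl (br c n)).Nonempty) → (C ∩ Fib c).Nonempty := by
      intro c C hC hne
      have key : (⋂ n, C ∩ Cl (br c n)).Nonempty := by
        refine IsCompact.nonempty_iInter_of_sequence_nonempty_isCompact_isClosed
          (fun n => C ∩ Cl (br c n)) (fun n => ?_) hne
          ((hC.inter isClosed_closure).isCompact) (fun n => hC.inter isClosed_closure)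
        exact Set.inter_subset_inter_right _ (by rw [hbr_succ]; exact hCl_mono (c n) (br c n))
      rwa [← Set.inter_iInter] at key
    have hFib_ne : ∀ c : ℕ → Bool, (Fib c).Nonempty := by
      intro c
      have := hInter c Set.univ isClosed_univ
        (fun n => by rw [Set.univ_inter]; exact (hCl_ne (br c n)).closure)
      simpa using this
    -- Zorn: a minimal closed set meeting every fiber
    let S : Set (Set X) := {C | IsClosed C ∧ ∀ c : ℕ → Bool, (C ∩ Fib c).Nonempty}
    have hUnivS : Set.univ ∈ S :=
      ⟨isClosed_univ, fun c => by simpa using hFib_ne c⟩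
    obtain ⟨Cm, hCmS, hCmmin⟩ : ∃ m, Minimal (fun C => C ∈ S) m := by
      apply zorn_superset S
      intro ch hchS hchain
      rcases ch.eq_empty_or_nonempty with rfl | hchne
      · exact ⟨Set.univ, hUnivS, by simp⟩
      · refine ⟨⋂₀ ch, ⟨isClosed_sInter fun C hC => (hchS hC).1, ?_⟩,
          fun s hs => Set.sInter_subset_of_mem hs⟩
        intro c
        have : Nonempty ch := hchne.to_subtype
        have key : (⋂ C : ch, (C.1 ∩ Fib c)).Nonempty := by
          refine IsCompact.nonempty_iInter_of_directed_nonempty_isCompact_isClosed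
            (fun C : ch => C.1 ∩ Fib c) ?_ (fun C => (hchS C.2).2 c)
            (fun C => ((hchS C.2).1.inter (isClosed_iInter fun _ => isClosed_closure)).isCompact)
            (fun C => (hchS C.2).1.inter (isClosed_iInter fun _ => isClosed_closure))
          rintro ⟨C, hC⟩ ⟨D, hD⟩
          rcases eq_or_ne C D with rfl | hne
          · exact ⟨⟨C, hC⟩, subset_rfl, subset_rfl⟩
          · rcases hchain hC hD hne with h | h
            · exact ⟨⟨C, hC⟩, subset_rfl, Set.inter_subset_inter_left _ h⟩
            · exact ⟨⟨D, hD⟩, Set.inter_subset_inter_left _ h, subset_rfl⟩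
        have heq : (⋂ C : ch, (C.1 ∩ Fib c)) = ⋂₀ ch ∩ Fib c := by
          rw [Set.sInter_eq_iInter, Set.iInter_inter]
        rwa [heq] at key
    have hCmne : Cm.Nonempty := (hCmS.2 (fun _ => false)).mono Set.inter_subset_left
    -- the countable subfamily
    let K : Set (X → Y) := Set.range fn
    have hKsub : K ⊆ F := by
      rintro _ ⟨s, rfl⟩
      exact hextF (node s)
    obtain ⟨O, hOopen, hOne, hsmall⟩ :=
      hcnt K hKsub (Set.countable_range fn) Cm hCmne η hη
    -- removing O from Cm still meets every fiber, contradicting minimality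
    have hC'S : Cm \ O ∈ S := by
      refine ⟨hCmS.1.sdiff hOopen, ?_⟩
      intro c
      by_cases hcase : (O ∩ (Cm ∩ Fib c)).Nonempty
      · obtain ⟨p, hpO, hpCm, hpFib⟩ := hcase
        refine hInter c (Cm \ O) (hCmS.1.sdiff hOopen) ?_
        intro n
        set b : ℕ → Bool := fun k => if k = n then !(c k) else c k with hbdef
        obtain ⟨q, hqCm, hqFib⟩ := hCmS.2 b
        have hbrbc : br b n = br c n :=
          hbr_eq b c n (fun k hk => by simp [hbdef, Nat.ne_of_lt hk])
        have hqO : q ∉ O := by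
          intro hqO
          have hpcl : p ∈ Cl (c n :: br c n) := by
            have := Set.mem_iInter.mp hpFib (n + 1)
            rwa [hbr_succ] at this
          have hqcl : q ∈ Cl ((!(c n)) :: br c n) := by
            have := Set.mem_iInter.mp hqFib (n + 1)
            rwa [hbr_succ, hbrbc, show b n = !(c n) by simp [hbdef]] at this
          have hfK : fn (br c n) ∈ K := ⟨br c n, rfl⟩
          cases hcn : c n with
          | false =>
            refine hsep' (br c n) p ?_ q ?_ ?_
            · rwa [hcn] at hpcl
            · rwa [hcn] at hqcl
            · exact hsmall _ hfK p ⟨hpO, hpCm⟩ q ⟨hqO, hqCm⟩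
          | true =>
            refine hsep' (br c n) q ?_ p ?_ ?_
            · rwa [hcn] at hqcl
            · rwa [hcn] at hpcl
            · exact hsmall _ hfK q ⟨hqO, hqCm⟩ p ⟨hpO, hpCm⟩
        have hqCl : q ∈ Cl (br c n) := by
          have := Set.mem_iInter.mp hqFib n
          rwa [hbrbc] at this
        exact ⟨q, ⟨hqCm, hqO⟩, hqCl⟩
      · obtain ⟨z, hz⟩ := hCmS.2 c
        refine ⟨z, ⟨hz.1, fun hzO => hcase ⟨z, hzO, hz⟩⟩, hz.2⟩
    have heq : Cm \ O = Cm := by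
      exact subset_antisymm Set.diff_subset (hCmmin hC'S Set.diff_subset)
    obtain ⟨p₀, hp₀O, hp₀Cm⟩ := hOne
    rw [← heq] at hp₀Cm
    exact hp₀Cm.2 hp₀O
end

section
/- Let S be a monoid acting on a compact topological space X such that for each s ∈ S the translation x ↦ s·x is continuous, and let f : X → ℝ be continuous. Then the family fS := {x ↦ f(s·x) : s ∈ S} contains no independent sequence if and only if for every countably infinite subset A ⊆ S there exists a countably infinite subset A' ⊆ A such that the pseudometric ρ_{f,A'}(x, y) := sup_{g ∈ A'} |f(g·x) − f(g·y)| on X is separable. -/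
/-- A sequence `(f n)` of real-valued functions on `Z` is *independent* if there are
reals `a < b` such that for all disjoint finite sets `P, M ⊆ ℕ` the set
`⋂_{n ∈ P} {f n < a} ∩ ⋂_{n ∈ M} {f n > b}` is nonempty. -/
def IsIndependentSeq {Z : Type*} (f : ℕ → Z → ℝ) : Prop :=
  ∃ a b : ℝ, a < b ∧ ∀ P M : Finset ℕ, Disjoint P M →
    ((⋂ n ∈ P, {z | f n z < a}) ∩ ⋂ n ∈ M, {z | b < f n z}).Nonempty

/-!
If `fS` has no independent sequence, enumerate an infinite `A ⊆ S` as `s₀, s₁, …`. By Rosenthal's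
dichotomy the bounded sequence `f (sₙ • ·)` has a pointwise convergent subsequence, and a pointwise
Cauchy sequence of functions makes the sup-pseudometric separable. Rosenthal's dichotomy itself
comes from the Nash-Williams (Galvin–Prikry) theorem, applied to the finite sets along which no
point realizes the alternating pattern `< a, > b, < a, …`: a homogeneous set of the first kind has
no `(a, b)`-oscillating point, and one of the second kind yields an independent subsequence; a
diagonal argument handles all rational `a < b` at once.

Conversely, if `f (sₙ • ·)` is independent, compactness gives for every `K ⊆ ℕ` a point `x_K`
with `f (sₙ • x_K) ≥ b` for `n ∈ K` and `≤ a` otherwise. Along any infinite `A' ⊆ {sₙ}` these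
continuum many points are pairwise `(b - a)`-apart, so no countable set is dense.
-/

open Filter Topology

lemma Set.Infinite.sep_lt {P : Set ℕ} (hP : P.Infinite) (n : ℕ) : {x ∈ P | n < x}.Infinite :=
  (hP.sdiff (Set.finite_Iic n)).mono fun _ hx => ⟨hx.1, not_le.mp hx.2⟩

lemma exists_strictMono_forall_mem {C : ℕ → Set ℕ} (hC : ∀ r, (C r).Infinite) :
    ∃ w : ℕ → ℕ, StrictMono w ∧ ∀ r, w r ∈ C r := by
  choose next hnext_mem hnext_gt using fun r v => (hC r).exists_gt v
  refine ⟨fun r => Nat.rec (next 0 0) (fun r prev => next (r + 1) prev) r,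
    strictMono_nat_of_lt_succ fun r => hnext_gt _ _, fun r => ?_⟩
  cases r <;> apply hnext_mem

namespace NashWilliams

theorem exists_strictMono_fusion (G : Finset ℕ → Set ℕ → Prop)
    (hG : ∀ D N N', N' ⊆ N → G D N → G D N') {M : Set ℕ} (hM : M.Infinite) (h0 : G ∅ M)
    (step : ∀ D N, N.Infinite → (∀ d ∈ D, ∀ x ∈ N, d < x) → G D N →
      ∃ n ∈ N, ∃ N' ⊆ N, N'.Infinite ∧ (∀ x ∈ N', n < x) ∧ G (insert n D) N') :
    ∃ m : ℕ → ℕ, StrictMono m ∧ (∀ k, m k ∈ M) ∧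
      ∀ k, G ((Finset.range k).image m) (m '' Set.Ici k) := by
  let State := {p : Finset ℕ × Set ℕ //
    p.2.Infinite ∧ (∀ d ∈ p.1, ∀ x ∈ p.2, d < x) ∧ G p.1 p.2}
  have hstep : ∀ p : State, ∃ q : ℕ × State, q.1 ∈ p.1.2 ∧ q.2.1.1 = insert q.1 p.1.1 ∧
      q.2.1.2 ⊆ p.1.2 ∧ ∀ x ∈ q.2.1.2, q.1 < x := by
    rintro ⟨⟨D, N⟩, hN, hDN, hGDN⟩
    obtain ⟨n, hn, N', hN'N, hN', hnN', hG'⟩ := step D N hN hDN hGDN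
    refine ⟨(n, ⟨(insert n D, N'), hN', fun d hd x hx => ?_, hG'⟩), hn, rfl, hN'N, hnN'⟩
    rcases Finset.mem_insert.mp hd with rfl | hd
    · exact hnN' x hx
    · exact hDN d hd x (hN'N hx)
  choose next hmem hD hsub hgt using hstep
  let st : ℕ → State := fun k => (fun p => (next p).2)^[k] ⟨(∅, M), hM, by simp, h0⟩
  let m : ℕ → ℕ := fun k => (next (st k)).1
  have hst : ∀ k, st (k + 1) = (next (st k)).2 := fun k => Function.iterate_succ_apply' _ _ _
  have hanti : Antitone fun k => (st k).1.2 :=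
    antitone_nat_of_succ_le fun k => by rw [hst]; exact hsub _
  have hm : StrictMono m :=
    strictMono_nat_of_lt_succ fun k => hgt _ _ (by rw [← hst]; exact hmem _)
  have hDk : ∀ k, (st k).1.1 = (Finset.range k).image m := by
    intro k
    induction k with
    | zero => rfl
    | succ k ih => rw [hst, hD, ih, Finset.range_add_one, Finset.image_insert]
  refine ⟨m, hm, fun k => hanti (Nat.zero_le k) (hmem _), fun k => ?_⟩
  rw [← hDk]
  refine hG _ _ _ ?_ (st k).2.2.2
  rintro _ ⟨j, hj, rfl⟩
  exact hanti hj (hmem _)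

def IsInitSeg (t : Finset ℕ) (N : Set ℕ) : Prop :=
  ↑t ⊆ N ∧ ∀ a ∈ N, ∀ b ∈ t, a ≤ b → a ∈ t

lemma IsInitSeg.insert_of_isLeast {t : Finset ℕ} {N : Set ℕ} {p : ℕ} (hp : IsLeast N p)
    (ht : IsInitSeg t (N \ {p})) : IsInitSeg (insert p t) N := by
  refine ⟨?_, fun a ha b hb hab => ?_⟩
  · rw [Finset.coe_insert]
    exact Set.insert_subset hp.1 (ht.1.trans Set.sdiff_subset)
  rcases eq_or_ne a p with rfl | hap
  · exact Finset.mem_insert_self _ _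
  rcases Finset.mem_insert.mp hb with rfl | hb
  · exact absurd (le_antisymm hab (hp.2 ha)) hap
  · exact Finset.mem_insert_of_mem (ht.2 a ⟨ha, hap⟩ b hb hab)

variable (F : Set (Finset ℕ))

/-- Accepting and rejecting in the sense of Galvin and Prikry. -/
def Accepts (M : Set ℕ) (s : Finset ℕ) : Prop :=
  ∀ N ⊆ M, N.Infinite → (∀ n ∈ N, ∀ m ∈ s, m < n) → ∃ t, IsInitSeg t N ∧ s ∪ t ∈ F

def Rejects (M : Set ℕ) (s : Finset ℕ) : Prop :=
  ∀ N ⊆ M, N.Infinite → ¬ Accepts F N s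

def Decides (M : Set ℕ) (s : Finset ℕ) : Prop :=
  Accepts F M s ∨ Rejects F M s

variable {F} {M N : Set ℕ} {s : Finset ℕ}

lemma Accepts.mono (h : N ⊆ M) (ha : Accepts F M s) : Accepts F N s :=
  fun N' hN' => ha N' (hN'.trans h)

lemma Rejects.mono (h : N ⊆ M) (hr : Rejects F M s) : Rejects F N s :=
  fun N' hN' => hr N' (hN'.trans h)

lemma Decides.mono (h : N ⊆ M) (hd : Decides F M s) : Decides F N s :=
  hd.imp (Accepts.mono h) (Rejects.mono h)

lemma accepts_of_mem (hs : s ∈ F) : Accepts F M s :=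
  fun _ _ _ _ => ⟨∅, ⟨by simp, by simp⟩, by simpa using hs⟩

lemma Rejects.union_of_finite {K : Set ℕ} (hr : Rejects F M s) (hK : K.Finite) :
    Rejects F (M ∪ K) s := fun N hN hNi ha =>
  hr (N \ K) (fun _ hx => (hN hx.1).resolve_right hx.2) (hNi.sdiff hK) (ha.mono Set.sdiff_subset)

lemma exists_decides (hM : M.Infinite) (s : Finset ℕ) :
    ∃ N ⊆ M, N.Infinite ∧ Decides F N s := by
  by_cases h : ∃ N ⊆ M, N.Infinite ∧ Accepts F N s
  · obtain ⟨N, hNM, hN, ha⟩ := h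
    exact ⟨N, hNM, hN, Or.inl ha⟩
  · exact ⟨M, subset_rfl, hM, Or.inr fun N hNM hN ha => h ⟨N, hNM, hN, ha⟩⟩

lemma accepts_of_forall_accepts_insert
    (h : ∀ p ∈ M, Accepts F {x ∈ M | p < x} (insert p s)) : Accepts F M s := by
  intro N hNM hN hs
  have hp : IsLeast N (sInf N) := ⟨Nat.sInf_mem hN.nonempty, fun x hx => Nat.sInf_le hx⟩
  have hlt : ∀ x ∈ N \ {sInf N}, sInf N < x :=
    fun x hx => lt_of_le_of_ne (hp.2 hx.1) (Ne.symm hx.2)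
  have hguard : ∀ x ∈ N \ {sInf N}, ∀ m ∈ insert (sInf N) s, m < x := by
    intro x hx m hm
    rcases Finset.mem_insert.mp hm with rfl | hm
    · exact hlt x hx
    · exact hs x hx.1 m hm
  obtain ⟨t, ht, htF⟩ := h _ (hNM hp.1) (N \ {sInf N}) (fun x hx => ⟨hNM hx.1, hlt x hx⟩)
    (hN.sdiff (Set.finite_singleton _)) hguard
  refine ⟨insert (sInf N) t, ht.insert_of_isLeast hp, ?_⟩
  rwa [Finset.union_insert, ← Finset.insert_union]

lemma Rejects.exists_forall_rejects_insert (hM : M.Infinite) (hr : Rejects F M s) :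
    ∃ N ⊆ M, N.Infinite ∧ ∀ n ∈ N, Rejects F N (insert n s) := by
  obtain ⟨m, hm, hmM, hdec⟩ := exists_strictMono_fusion
    (fun D N => ∀ d ∈ D, Decides F N (insert d s))
    (fun _ _ _ h hG d hd => (hG d hd).mono h) hM (by simp) fun D N hN _ hG => by
      obtain ⟨n, hn⟩ := hN.nonempty
      obtain ⟨N', hN'N, hN', hN'dec⟩ := exists_decides (F := F) (hN.sep_lt n) (insert n s)
      refine ⟨n, hn, N', fun x hx => (hN'N hx).1, hN', fun x hx => (hN'N hx).2, fun d hd => ?_⟩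
      rcases Finset.mem_insert.mp hd with rfl | hd
      · exact hN'dec
      · exact (hG d hd).mono fun x hx => (hN'N hx).1
  have hdec' : ∀ k, Decides F (m '' Set.Ici (k + 1)) (insert (m k) s) := fun k =>
    hdec (k + 1) (m k) (Finset.mem_image_of_mem m (Finset.self_mem_range_succ k))
  have himM : ∀ K, m '' K ⊆ M := by rintro K _ ⟨k, -, rfl⟩; exact hmM k
  have himInf : ∀ {K : Set ℕ}, K.Infinite → (m '' K).Infinite :=
    fun hK => hK.image hm.injective.injOn
  set A := {k | Accepts F (m '' Set.Ici (k + 1)) (insert (m k) s)}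
  by_cases hA : A.Infinite
  · refine absurd (accepts_of_forall_accepts_insert ?_) (hr _ (himM A) (himInf hA))
    rintro _ ⟨k, hk, rfl⟩
    refine Accepts.mono ?_ hk
    rintro _ ⟨⟨j, -, rfl⟩, hkj⟩
    exact ⟨j, hm.lt_iff_lt.mp hkj, rfl⟩
  obtain ⟨k₀, hk₀⟩ := (Set.not_infinite.mp hA).bddAbove
  refine ⟨m '' Set.Ici (k₀ + 1), himM _, himInf (Set.Ici_infinite _), ?_⟩
  rintro _ ⟨k, hk, rfl⟩
  have hrej : Rejects F (m '' Set.Ici (k + 1)) (insert (m k) s) :=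
    (hdec' k).resolve_left fun hacc => Nat.not_le.mpr hk (hk₀ hacc)
  refine (hrej.union_of_finite ((Set.finite_Iio (k + 1)).image m)).mono ?_
  rintro _ ⟨j, -, rfl⟩
  rcases lt_or_ge j (k + 1) with hj | hj
  · exact Or.inr ⟨j, hj, rfl⟩
  · exact Or.inl ⟨j, hj, rfl⟩

lemma exists_forall_mem_forall_rejects_insert (S : Finset (Finset ℕ)) (hM : M.Infinite)
    (h : ∀ s ∈ S, Rejects F M s) :
    ∃ N ⊆ M, N.Infinite ∧ ∀ s ∈ S, ∀ n ∈ N, Rejects F N (insert n s) := by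
  induction S using Finset.induction generalizing M with
  | empty => exact ⟨M, subset_rfl, hM, by simp⟩
  | @insert s₀ S _ ih =>
    obtain ⟨Q, hQM, hQ, hQS⟩ := ih hM fun s hs => h s (Finset.mem_insert_of_mem hs)
    obtain ⟨N, hNQ, hN, hNs₀⟩ :=
      ((h s₀ (Finset.mem_insert_self _ _)).mono hQM).exists_forall_rejects_insert hQ
    refine ⟨N, hNQ.trans hQM, hN, fun s hs n hn => ?_⟩
    rcases Finset.mem_insert.mp hs with rfl | hs
    · exact hNs₀ n hn
    · exact (hQS s hs n (hNQ hn)).mono hNQ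

lemma exists_mem_forall_subset_insert_rejects {D : Finset ℕ} (hN : N.Infinite)
    (h : ∀ s ⊆ D, Rejects F N s) :
    ∃ n ∈ N, ∃ N' ⊆ N, N'.Infinite ∧ (∀ x ∈ N', n < x) ∧ ∀ s ⊆ insert n D, Rejects F N' s := by
  obtain ⟨Q, hQN, hQ, hQD⟩ := exists_forall_mem_forall_rejects_insert D.powerset hN
    fun s hs => h s (Finset.mem_powerset.mp hs)
  obtain ⟨n, hn⟩ := hQ.nonempty
  have hsub : {x ∈ Q | n < x} ⊆ Q := fun x hx => hx.1
  refine ⟨n, hQN hn, _, hsub.trans hQN, hQ.sep_lt n, fun x hx => hx.2, fun s hs => ?_⟩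
  by_cases hns : n ∈ s
  · rw [← Finset.insert_erase hns]
    exact (hQD _ (Finset.mem_powerset.mpr (Finset.subset_insert_iff.mp hs)) n hn).mono hsub
  · exact (h s ((Finset.subset_insert_iff_of_notMem hns).mp hs)).mono (hsub.trans hQN)

theorem dichotomy (F : Set (Finset ℕ)) {M₀ : Set ℕ} (hM₀ : M₀.Infinite) :
    (∃ M ⊆ M₀, M.Infinite ∧ ∀ N ⊆ M, N.Infinite → ∃ t, IsInitSeg t N ∧ t ∈ F) ∨
    (∃ M ⊆ M₀, M.Infinite ∧ ∀ t : Finset ℕ, ↑t ⊆ M → t ∉ F) := by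
  by_cases hacc : ∃ N ⊆ M₀, N.Infinite ∧ Accepts F N ∅
  · obtain ⟨N, hNM, hN, ha⟩ := hacc
    refine Or.inl ⟨N, hNM, hN, fun N' hN'N hN' => ?_⟩
    simpa using ha N' hN'N hN' (by simp)
  have hrej : Rejects F M₀ ∅ := fun N hNM hN ha => hacc ⟨N, hNM, hN, ha⟩
  obtain ⟨m, hm, hmM, hG⟩ := exists_strictMono_fusion (fun D N => ∀ s ⊆ D, Rejects F N s)
    (fun _ _ _ h hG s hs => (hG s hs).mono h) hM₀
    (fun s hs => by rwa [Finset.subset_empty.mp hs])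
    fun _ _ hN _ hG => exists_mem_forall_subset_insert_rejects hN hG
  refine Or.inr ⟨Set.range m, Set.range_subset_iff.mpr hmM,
    Set.infinite_range_of_injective hm.injective, fun t ht htF => ?_⟩
  -- `m j ≥ j`, so `t ⊆ range m` is covered by the first `max t + 1` values of `m`
  have htk : t ⊆ (Finset.range (t.sup id + 1)).image m := by
    intro x hx
    obtain ⟨j, rfl⟩ := ht hx
    exact Finset.mem_image_of_mem m (Finset.mem_range.mpr
      (Nat.lt_succ_of_le ((hm.id_le j).trans (Finset.le_sup (f := id) hx))))
  exact hG _ t htk _ subset_rfl ((Set.Ici_infinite _).image hm.injective.injOn)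
    (accepts_of_mem htF)

end NashWilliams

open NashWilliams

section Rosenthal

variable {Z : Type*}

/-- `z` realizes the pattern `< a, > b, < a, > b, …` along `t` listed in increasing order
(`#{m ∈ t | m < n}` is the position of `n` in `t`). -/
def RealizesAlternation (u : ℕ → Z → ℝ) (a b : ℝ) (z : Z) (t : Finset ℕ) : Prop :=
  ∀ n ∈ t, if Even (t.filter (· < n)).card then u n z < a else b < u n z

def Oscillates (u : ℕ → Z → ℝ) (a b : ℝ) (M : Set ℕ) (x : Z) : Prop :=
  {n ∈ M | u n x < a}.Infinite ∧ {n ∈ M | b < u n x}.Infinite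

lemma Oscillates.mono {u : ℕ → Z → ℝ} {a b : ℝ} {M N : Set ℕ} {x : Z} (h : N ⊆ M)
    (hN : Oscillates u a b N x) : Oscillates u a b M x :=
  ⟨hN.1.mono fun _ hn => ⟨h hn.1, hn.2⟩, hN.2.mono fun _ hn => ⟨h hn.1, hn.2⟩⟩

lemma card_filter_lt_of_isInitSeg {w : ℕ → ℕ} (hw : StrictMono w) {t : Finset ℕ}
    (ht : IsInitSeg t (Set.range w)) {i : ℕ} (hi : w i ∈ t) :
    (t.filter (· < w i)).card = i := by
  have : t.filter (· < w i) = (Finset.range i).image w := by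
    ext y
    simp only [Finset.mem_filter, Finset.mem_image, Finset.mem_range]
    constructor
    · rintro ⟨hy, hlt⟩
      obtain ⟨j, rfl⟩ := ht.1 hy
      exact ⟨j, hw.lt_iff_lt.mp hlt, rfl⟩
    · rintro ⟨j, hj, rfl⟩
      exact ⟨ht.2 _ ⟨j, rfl⟩ _ hi (hw hj).le, hw hj⟩
  rw [this, Finset.card_image_of_injective _ hw.injective, Finset.card_range]

lemma card_filter_lt_image {e : ℕ → ℕ} (he : StrictMono e) (T : Finset ℕ) (j : ℕ) :
    ((T.image e).filter (· < e j)).card = (T.filter (· < j)).card := by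
  rw [Finset.filter_image, Finset.card_image_of_injective _ he.injective]
  simp only [he.lt_iff_lt]

lemma not_oscillates_of_forall_isInitSeg {u : ℕ → Z → ℝ} {a b : ℝ} {M : Set ℕ}
    (hM : ∀ N ⊆ M, N.Infinite → ∃ t, IsInitSeg t N ∧ ¬ ∃ z, RealizesAlternation u a b z t)
    (x : Z) : ¬ Oscillates u a b M x := by
  rintro ⟨hlow, hhigh⟩
  obtain ⟨w, hw, hwC⟩ := exists_strictMono_forall_mem
    (C := fun r => if Even r then {n ∈ M | u n x < a} else {n ∈ M | b < u n x})
    fun r => by split_ifs <;> assumption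
  have hwM : Set.range w ⊆ M := by
    rintro _ ⟨r, rfl⟩
    have := hwC r
    split_ifs at this <;> exact this.1
  obtain ⟨t, ht, hnot⟩ := hM _ hwM (Set.infinite_range_of_injective hw.injective)
  refine hnot ⟨x, fun n hn => ?_⟩
  obtain ⟨i, rfl⟩ := ht.1 hn
  rw [card_filter_lt_of_isInitSeg hw ht hn]
  have := hwC i
  split_ifs at this ⊢ <;> exact this.2

/-- Padding: `2k + 1` can be placed at a position of any prescribed parity, because the slot
`2k` may or may not be filled. -/
lemma exists_finset_even_card_filter_iff (P K : Finset ℕ) :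
    ∃ T : Finset ℕ, ∀ k ∈ K, 2 * k + 1 ∈ T ∧ (Even (T.filter (· < 2 * k + 1)).card ↔ k ∈ P) := by
  induction K using Finset.induction_on_max with
  | empty => exact ⟨∅, by simp⟩
  | insert n K hK ih =>
    obtain ⟨T, hT⟩ := ih
    set T₀ := T.filter (· < 2 * n)
    set E := if (Even T₀.card ↔ n ∈ P) then T₀ else insert (2 * n) T₀
    have hE : Even E.card ↔ n ∈ P := by
      simp only [E]
      split_ifs with h
      · exact h
      · rw [Finset.card_insert_of_notMem (by simp [T₀]), Nat.even_add_one]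
        tauto
    have hElt : ∀ y ∈ E, y < 2 * n + 1 := by
      intro y hy
      simp only [E] at hy
      split_ifs at hy <;> simp [T₀] at hy <;> omega
    have hEfilter : ∀ k ∈ K, E.filter (· < 2 * k + 1) = T.filter (· < 2 * k + 1) := by
      intro k hk
      have := hK k hk
      ext y
      simp only [E, T₀]
      split_ifs <;> simp <;> grind
    refine ⟨insert (2 * n + 1) E, fun k hk => ?_⟩
    have hfilter : ∀ k, k ≤ n → (insert (2 * n + 1) E).filter (· < 2 * k + 1) =
        E.filter (· < 2 * k + 1) := fun k hk => by
      rw [Finset.filter_insert, if_neg (by omega)]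
    rcases Finset.mem_insert.mp hk with rfl | hk
    · refine ⟨Finset.mem_insert_self _ _, ?_⟩
      rwa [hfilter k le_rfl, Finset.filter_true_of_mem hElt]
    · have hkn := hK k hk
      refine ⟨Finset.mem_insert_of_mem ?_, ?_⟩
      · simp only [E, T₀]
        split_ifs <;> simp [(hT k hk).1] <;> omega
      · rw [hfilter k hkn.le, hEfilter k hk]
        exact (hT k hk).2

lemma exists_isIndependentSeq_of_forall_realizes {u : ℕ → Z → ℝ} {a b : ℝ} (hab : a < b)
    {M : Set ℕ} (hM : M.Infinite)
    (h : ∀ t : Finset ℕ, ↑t ⊆ M → ∃ z, RealizesAlternation u a b z t) :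
    ∃ c : ℕ → ℕ, StrictMono c ∧ IsIndependentSeq fun k => u (c k) := by
  set e := Nat.nth (· ∈ M)
  have he : StrictMono e := Nat.nth_strictMono hM
  refine ⟨fun k => e (2 * k + 1), fun i j hij => he (by omega), a, b, hab, fun P Q hPQ => ?_⟩
  obtain ⟨T, hT⟩ := exists_finset_even_card_filter_iff P (P ∪ Q)
  obtain ⟨z, hz⟩ := h (T.image e) fun x hx => by
    obtain ⟨j, -, rfl⟩ := Finset.mem_image.mp hx
    exact Nat.nth_mem_of_infinite hM j
  have key : ∀ k ∈ P ∪ Q, if k ∈ P then u (e (2 * k + 1)) z < a else b < u (e (2 * k + 1)) z := by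
    intro k hk
    have := hz _ (Finset.mem_image_of_mem e (hT k hk).1)
    rw [card_filter_lt_image he] at this
    simpa only [(hT k hk).2] using this
  refine ⟨z, Set.mem_iInter₂.mpr fun k hk => ?_, Set.mem_iInter₂.mpr fun k hk => ?_⟩
  · simpa [hk] using key k (Finset.mem_union_left _ hk)
  · simpa [Finset.disjoint_right.mp hPQ hk] using key k (Finset.mem_union_right _ hk)

lemma exists_subset_forall_not_oscillates {u : ℕ → Z → ℝ}
    (hu : ∀ c, StrictMono c → ¬ IsIndependentSeq fun k => u (c k)) {a b : ℝ} (hab : a < b)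
    {M₀ : Set ℕ} (hM₀ : M₀.Infinite) :
    ∃ M ⊆ M₀, M.Infinite ∧ ∀ x, ¬ Oscillates u a b M x := by
  rcases dichotomy {t | ¬ ∃ z, RealizesAlternation u a b z t} hM₀ with
    ⟨M, hMM₀, hM, hinit⟩ | ⟨M, -, hM, hfin⟩
  · exact ⟨M, hMM₀, hM, not_oscillates_of_forall_isInitSeg hinit⟩
  · obtain ⟨c, hc, hind⟩ :=
      exists_isIndependentSeq_of_forall_realizes hab hM fun t ht => not_not.mp (hfin t ht)
    exact absurd hind (hu c hc)

lemma oscillates_image_Ici {u : ℕ → Z → ℝ} {a b : ℝ} {m : ℕ → ℕ} (hm : StrictMono m) (K : ℕ)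
    {x : Z} (h : (∃ᶠ k in atTop, u (m k) x < a) ∧ ∃ᶠ k in atTop, b < u (m k) x) :
    Oscillates u a b (m '' Set.Ici K) x := by
  have key : ∀ p : ℝ → Prop, (∃ᶠ k in atTop, p (u (m k) x)) →
      {n ∈ m '' Set.Ici K | p (u n x)}.Infinite := fun p hp => by
    refine ((Nat.frequently_atTop_iff_infinite.mp (hp.and_eventually (eventually_ge_atTop K))).image
      hm.injective.injOn).mono ?_
    rintro _ ⟨k, ⟨hk, hKk⟩, rfl⟩
    exact ⟨⟨k, hKk, rfl⟩, hk⟩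
  exact ⟨key (· < a) h.1, key (b < ·) h.2⟩

lemma exists_strictMono_forall_not_frequently {u : ℕ → Z → ℝ}
    (hu : ∀ c, StrictMono c → ¬ IsIndependentSeq fun k => u (c k)) :
    ∃ m : ℕ → ℕ, StrictMono m ∧ ∀ a b : ℚ, a < b → ∀ x,
      ¬ ((∃ᶠ k in atTop, u (m k) x < a) ∧ ∃ᶠ k in atTop, (b : ℝ) < u (m k) x) := by
  have : Nonempty {p : ℚ × ℚ // p.1 < p.2} := ⟨⟨(0, 1), zero_lt_one⟩⟩
  obtain ⟨q, hq⟩ := exists_surjective_nat {p : ℚ × ℚ // p.1 < p.2}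
  obtain ⟨m, hm, -, hG⟩ := exists_strictMono_fusion
    (fun D N => ∀ i < D.card, ∀ x, ¬ Oscillates u (q i).1.1 (q i).1.2 N x)
    (fun _ _ _ h hG i hi x hx => hG i hi x (hx.mono h)) Set.infinite_univ (by simp)
    fun D N hN hDN hG => by
      obtain ⟨M, hMN, hM, hMosc⟩ :=
        exists_subset_forall_not_oscillates hu (Rat.cast_lt.mpr (q D.card).2) hN
      obtain ⟨n, hn⟩ := hM.nonempty
      refine ⟨n, hMN hn, _, fun x hx => hMN hx.1, hM.sep_lt n, fun x hx => hx.2, ?_⟩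
      intro i hi x hx
      rw [Finset.card_insert_of_notMem fun h => (hDN n h n (hMN hn)).false] at hi
      rcases Nat.lt_succ_iff_lt_or_eq.mp hi with hi | rfl
      · exact hG i hi x (hx.mono fun y hy => hMN hy.1)
      · exact hMosc x (hx.mono fun y hy => hy.1)
  refine ⟨m, hm, fun a b hab x hosc => ?_⟩
  obtain ⟨i, hi⟩ := hq ⟨(a, b), hab⟩
  have hcard : ((Finset.range (i + 1)).image m).card = i + 1 := by
    rw [Finset.card_image_of_injective _ hm.injective, Finset.card_range]
  exact hG (i + 1) i (by omega) x (by rw [hi]; exact oscillates_image_Ici hm (i + 1) hosc)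

theorem exists_strictMono_tendsto_of_forall_not_isIndependentSeq {u : ℕ → Z → ℝ}
    (hbdd : ∀ x, ∃ C, ∀ n, |u n x| ≤ C)
    (hu : ∀ c, StrictMono c → ¬ IsIndependentSeq fun k => u (c k)) :
    ∃ m : ℕ → ℕ, StrictMono m ∧ ∀ x, ∃ l, Tendsto (fun k => u (m k) x) atTop (𝓝 l) := by
  obtain ⟨m, hm, hosc⟩ := exists_strictMono_forall_not_frequently hu
  refine ⟨m, hm, fun x => ?_⟩
  obtain ⟨C, hC⟩ := hbdd x
  refine tendsto_of_no_upcrossings Rat.denseRange_cast ?_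
    (isBoundedUnder_of ⟨C, fun k => (abs_le.mp (hC _)).2⟩)
    (isBoundedUnder_of ⟨-C, fun k => (abs_le.mp (hC _)).1⟩)
  rintro _ ⟨a, rfl⟩ _ ⟨b, rfl⟩ hab
  exact hosc a b (Rat.cast_lt.mp hab) x

end Rosenthal

section Separability

variable {Z : Type*}

lemma exists_countable_forall_exists_eq {ι : Type*} [Countable ι] (κ : Z → ι) :
    ∃ D : Set Z, D.Countable ∧ ∀ x, ∃ y ∈ D, κ y = κ x := by
  rcases isEmpty_or_nonempty Z with hZ | hZ
  · exact ⟨∅, Set.countable_empty, fun x => isEmptyElim x⟩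
  · exact ⟨Set.range (Function.invFun κ), Set.countable_range _,
      fun x => ⟨_, ⟨κ x, rfl⟩, Function.invFun_eq ⟨x, rfl⟩⟩⟩

lemma abs_sub_lt_of_floor_div_eq {α β δ : ℝ} (hδ : 0 < δ) (h : ⌊α / δ⌋ = ⌊β / δ⌋) :
    |α - β| < δ := by
  have := Int.abs_sub_lt_one_of_floor_eq_floor h
  rwa [← sub_div, abs_div, abs_of_pos hδ, div_lt_one hδ] at this

/-- Two points with the same index `K` of `ε / 3`-stabilisation whose values `v 0, …, v K` lie in
the same cells of the `ε / 3`-grid stay `ε`-close along the whole sequence. -/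
lemma exists_countable_net_of_cauchySeq {v : ℕ → Z → ℝ} (hv : ∀ x, CauchySeq fun k => v k x)
    {ε : ℝ} (hε : 0 < ε) :
    ∃ D : Set Z, D.Countable ∧ ∀ x, ∃ y ∈ D, ∀ k, |v k x - v k y| ≤ ε := by
  have hδ : 0 < ε / 3 := by positivity
  choose K hK using fun x => Metric.cauchySeq_iff'.mp (hv x) (ε / 3) hδ
  obtain ⟨D, hD, hDx⟩ := exists_countable_forall_exists_eq
    fun x => (K x, (List.range (K x + 1)).map fun j => ⌊v j x / (ε / 3)⌋)
  refine ⟨D, hD, fun x => ?_⟩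
  obtain ⟨y, hy, hxy⟩ := hDx x
  obtain ⟨hKyx, hL⟩ := Prod.mk.inj hxy
  rw [hKyx] at hL
  have hcell : ∀ j ≤ K x, |v j x - v j y| < ε / 3 := fun j hj =>
    abs_sub_lt_of_floor_div_eq hδ
      (List.map_inj_left.mp hL j (List.mem_range.mpr (Nat.lt_succ_of_le hj))).symm
  refine ⟨y, hy, fun k => ?_⟩
  rcases le_or_gt k (K x) with hk | hk
  · linarith [hcell k hk]
  have hx := hK x k hk.le
  have hy := hK y k (hKyx ▸ hk.le)
  rw [hKyx, Real.dist_eq] at hy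
  rw [Real.dist_eq] at hx
  obtain ⟨hx₁, hx₂⟩ := abs_lt.mp hx
  obtain ⟨hy₁, hy₂⟩ := abs_lt.mp hy
  obtain ⟨hc₁, hc₂⟩ := abs_lt.mp (hcell (K x) le_rfl)
  exact abs_le.mpr ⟨by linarith, by linarith⟩

theorem exists_countable_forall_abs_sub_le_of_cauchySeq {v : ℕ → Z → ℝ}
    (hv : ∀ x, CauchySeq fun k => v k x) :
    ∃ D : Set Z, D.Countable ∧ ∀ x, ∀ ε > 0, ∃ y ∈ D, ∀ k, |v k x - v k y| ≤ ε := by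
  choose D hD hDx using fun n : ℕ =>
    exists_countable_net_of_cauchySeq hv (Nat.one_div_pos_of_nat (α := ℝ) (n := n))
  refine ⟨⋃ n, D n, Set.countable_iUnion hD, fun x ε hε => ?_⟩
  obtain ⟨n, hn⟩ := exists_nat_one_div_lt hε
  obtain ⟨y, hy, hxy⟩ := hDx n x
  exact ⟨y, Set.mem_iUnion.mpr ⟨n, hy⟩, fun k => (hxy k).trans hn.le⟩

lemma not_countable_set_nat : ¬ Countable (Set ℕ) := fun _ =>
  let ⟨f, hf⟩ := exists_surjective_nat (Set ℕ)
  Function.cantor_surjective f hf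

lemma not_forall_exists_mem_abs_sub_le {ψ : ℕ → Z → ℝ} {a b : ℝ} (hab : a < b)
    (hsep : ∀ K : Set ℕ, ∃ x, ∀ n, (n ∈ K → b ≤ ψ n x) ∧ (n ∉ K → ψ n x ≤ a))
    {D : Set Z} (hD : D.Countable) :
    ¬ ∀ x, ∃ y ∈ D, ∀ n, |ψ n x - ψ n y| ≤ (b - a) / 3 := by
  intro happrox
  choose x hx using hsep
  choose y hyD hy using fun K => happrox (x K)
  have hinj : Function.Injective fun K => (⟨y K, hyD K⟩ : D) := by
    intro K L hKL
    have hyKL : y K = y L := congrArg Subtype.val hKL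
    by_contra hne
    obtain ⟨n, hn⟩ : ∃ n, ¬ (n ∈ K ↔ n ∈ L) := not_forall.mp (mt Set.ext hne)
    obtain ⟨hK₁, hK₂⟩ := abs_le.mp (hy K n)
    obtain ⟨hL₁, hL₂⟩ := abs_le.mp (hy L n)
    rw [hyKL] at hK₁ hK₂
    by_cases hnK : n ∈ K
    · have := (hx K n).1 hnK
      have := (hx L n).2 (by tauto)
      linarith
    · have := (hx K n).2 hnK
      have := (hx L n).1 (by tauto)
      linarith
  have := hD.to_subtype
  exact not_countable_set_nat hinj.countable

end Separability

section Independence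

variable {Z : Type*}

lemma IsIndependentSeq.injective {f : ℕ → Z → ℝ} (hf : IsIndependentSeq f) :
    Function.Injective f := by
  obtain ⟨a, b, hab, h⟩ := hf
  intro i j hij
  by_contra hne
  obtain ⟨z, hz₁, hz₂⟩ := h {i} {j} (Finset.disjoint_singleton.mpr hne)
  simp only [Finset.mem_singleton, Set.iInter_iInter_eq_left, Set.mem_ofPred_eq] at hz₁ hz₂
  rw [hij] at hz₁
  linarith

lemma IsIndependentSeq.comp_injective {f : ℕ → Z → ℝ} (hf : IsIndependentSeq f) {w : ℕ → ℕ}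
    (hw : Function.Injective w) : IsIndependentSeq fun k => f (w k) := by
  obtain ⟨a, b, hab, h⟩ := hf
  refine ⟨a, b, hab, fun P M hPM => ?_⟩
  obtain ⟨z, hzP, hzM⟩ := h (P.image w) (M.image w) ((Finset.disjoint_image hw).mpr hPM)
  simp only [Finset.set_biInter_finset_image] at hzP hzM
  exact ⟨z, hzP, hzM⟩

lemma IsIndependentSeq.exists_separated [TopologicalSpace Z] [CompactSpace Z] {g : ℕ → Z → ℝ}
    (hg : ∀ n, Continuous (g n)) (h : IsIndependentSeq g) :
    ∃ a b, a < b ∧ ∀ K : Set ℕ, ∃ x, ∀ n, (n ∈ K → b ≤ g n x) ∧ (n ∉ K → g n x ≤ a) := by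
  classical
  obtain ⟨a, b, hab, hind⟩ := h
  refine ⟨a, b, hab, fun K => ?_⟩
  let C : ℕ → Set Z := fun n => if n ∈ K then {x | b ≤ g n x} else {x | g n x ≤ a}
  have hC : ∀ n, IsClosed (C n) := fun n => by
    by_cases hn : n ∈ K
    · simpa [C, hn] using isClosed_le continuous_const (hg n)
    · simpa [C, hn] using isClosed_le (hg n) continuous_const
  obtain ⟨x, -, hx⟩ := isCompact_univ.inter_iInter_nonempty C hC fun s => by
    obtain ⟨z, hzP, hzM⟩ :=
      hind _ _ (Finset.disjoint_filter_filter_not s s (· ∈ K)).symm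
    simp only [Set.mem_iInter, Set.mem_ofPred_eq, Finset.mem_filter] at hzP hzM
    refine ⟨z, trivial, Set.mem_iInter₂.mpr fun n hn => ?_⟩
    by_cases hnK : n ∈ K
    · simpa [C, hnK] using (hzM n ⟨hn, hnK⟩).le
    · simpa [C, hnK] using (hzP n ⟨hn, hnK⟩).le
  refine ⟨x, fun n => ⟨fun hn => ?_, fun hn => ?_⟩⟩
  · simpa [C, hn] using Set.mem_iInter.mp hx n
  · simpa [C, hn] using Set.mem_iInter.mp hx n

end Independence

section Translates

variable {S X : Type*} [SMul S X] {f : X → ℝ}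

theorem exists_countable_approx_of_not_isIndependentSeq {C : ℝ} (hC : ∀ x, |f x| ≤ C)
    (hno : ¬ ∃ s : ℕ → S, IsIndependentSeq fun n (x : X) => f (s n • x))
    {A : Set S} (hA : A.Infinite) :
    ∃ A' ⊆ A, A'.Countable ∧ A'.Infinite ∧ ∃ D : Set X, D.Countable ∧ ∀ x : X, ∀ ε : ℝ, 0 < ε →
      ∃ y ∈ D, ∀ g ∈ A', |f (g • x) - f (g • y)| ≤ ε := by
  let e : ℕ → S := fun n => Set.Infinite.natEmbedding A hA n
  have he : Function.Injective e :=
    Subtype.val_injective.comp (Set.Infinite.natEmbedding A hA).injective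
  obtain ⟨m, hm, hlim⟩ := exists_strictMono_tendsto_of_forall_not_isIndependentSeq
    (u := fun n x => f (e n • x)) (fun _ => ⟨C, fun _ => hC _⟩) fun c _ hc => hno ⟨e ∘ c, hc⟩
  obtain ⟨D, hD, hDx⟩ := exists_countable_forall_abs_sub_le_of_cauchySeq
    fun x => (hlim x).choose_spec.cauchySeq
  refine ⟨Set.range (e ∘ m), Set.range_subset_iff.mpr fun k => (Set.Infinite.natEmbedding A hA _).2,
    Set.countable_range _, Set.infinite_range_of_injective (he.comp hm.injective), D, hD,
    fun x ε hε => ?_⟩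
  obtain ⟨y, hy, hxy⟩ := hDx x ε hε
  exact ⟨y, hy, Set.forall_mem_range.mpr hxy⟩

theorem not_exists_countable_approx_of_isIndependentSeq [TopologicalSpace X] [CompactSpace X]
    (hcont : ∀ s : S, Continuous fun x : X => s • x) (hf : Continuous f) {s : ℕ → S}
    (hs : IsIndependentSeq fun n (x : X) => f (s n • x)) {A' : Set S} (hA'inf : A'.Infinite)
    (hA's : A' ⊆ Set.range s) :
    ¬ ∃ D : Set X, D.Countable ∧ ∀ x : X, ∀ ε : ℝ, 0 < ε →
      ∃ y ∈ D, ∀ g ∈ A', |f (g • x) - f (g • y)| ≤ ε := by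
  rintro ⟨D, hD, happrox⟩
  have hN : (s ⁻¹' A').Infinite := Set.Infinite.preimage' (by rwa [Set.inter_eq_left.mpr hA's])
  let w := Set.Infinite.natEmbedding _ hN
  obtain ⟨a, b, hab, hsep⟩ :=
    (hs.comp_injective (Subtype.val_injective.comp w.injective)).exists_separated
      fun k => hf.comp (hcont _)
  refine not_forall_exists_mem_abs_sub_le hab hsep hD fun x => ?_
  obtain ⟨y, hy, hxy⟩ := happrox x ((b - a) / 3) (by linarith)
  exact ⟨y, hy, fun k => hxy _ (w k).2⟩

end Translates

theorem stmt3 {S X : Type*} [Monoid S] [TopologicalSpace X] [CompactSpace X]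
    [MulAction S X] (hcont : ∀ s : S, Continuous fun x : X => s • x)
    (f : X → ℝ) (hf : Continuous f) :
    -- `fS` contains no independent sequence ↔
    (¬ ∃ s : ℕ → S, IsIndependentSeq fun n (x : X) => f (s n • x)) ↔
      -- for every countably infinite `A ⊆ S` there is a countably infinite `A' ⊆ A`
      -- such that the pseudometric `ρ_{f,A'}(x,y) = sup_{g ∈ A'} |f(g•x) - f(g•y)|`
      -- on `X` is separable
      (∀ A : Set S, A.Countable → A.Infinite →
        ∃ A' ⊆ A, A'.Countable ∧ A'.Infinite ∧
          ∃ D : Set X, D.Countable ∧ ∀ x : X, ∀ ε : ℝ, 0 < ε →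
            ∃ y ∈ D, ∀ g ∈ A', |f (g • x) - f (g • y)| ≤ ε) := by
  obtain ⟨C, hC⟩ := isCompact_univ.exists_bound_of_continuousOn hf.continuousOn
  constructor
  · intro hno A _ hA
    exact exists_countable_approx_of_not_isIndependentSeq
      (fun x => (Real.norm_eq_abs _).symm.trans_le (hC x trivial)) hno hA
  · rintro h ⟨s, hs⟩
    have hsinj : Function.Injective s :=
      Function.Injective.of_comp (f := fun (g : S) (x : X) => f (g • x)) hs.injective
    obtain ⟨A', hA's, -, hA'inf, hD⟩ :=
      h (Set.range s) (Set.countable_range s) (Set.infinite_range_of_injective hsinj)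
    exact not_exists_countable_approx_of_isIndependentSeq hcont hf hs hA'inf hA's hD
end

section
/- Let S be a monoid, A a finite set with the discrete topology, and X ⊆ A^S a subshift, i.e. a closed subset of the product space A^S invariant under the shift action (s·ω)(t) = ω(ts). Then the family of translation maps {x ↦ s·x : s ∈ S} from X to A^S is a fragmented family with respect to the product uniformity of A^S — explicitly: for every nonempty subset B ⊆ X and every finite set T ⊆ S there is an open set O ⊆ X with O ∩ B ≠ ∅ such that for all s ∈ S, all t ∈ T and all x, y ∈ O ∩ B one has x(ts) = y(ts) — if and only if the space X is scattered. Moreover, if S is countable, these conditions are equivalent to X being a countable set. -/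
/-!
Since the translate by `1` is the identity, the entourage for `T = {1}` already forces every
`O ∩ B` in the fragmentability condition to be a single point, so fragmentability of the
translations is exactly scatteredness of `X`. For countable `S`, `S → A` is Polish, and there a
closed set is scattered iff it is countable: an uncountable closed set contains a nonempty perfect
set (Cantor–Bendixson), which has no isolated point, and conversely a set without isolated points
has perfect closure, which contains a Cantor set and so is uncountable.
-/

open Set Filter Topology TopologicalSpace

section Scattered

variable {α : Type*} [TopologicalSpace α]

def IsScattered (X : Set α) : Prop :=
  ∀ B ⊆ X, B.Nonempty → ∃ x ∈ B, ∃ O : Set α, IsOpen O ∧ O ∩ B = {x}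

theorem exists_isOpen_inter_eq_singleton_iff_not_accPt {B : Set α} {x : α} (hx : x ∈ B) :
    (∃ O : Set α, IsOpen O ∧ O ∩ B = {x}) ↔ ¬AccPt x (𝓟 B) := by
  rw [accPt_iff_nhds]
  push Not
  constructor
  · rintro ⟨O, hO, hOB⟩
    refine ⟨O, hO.mem_nhds (hOB.symm ▸ mem_singleton x : x ∈ O ∩ B).1, fun y hy => ?_⟩
    rwa [hOB] at hy
  · rintro ⟨U, hU, hUB⟩
    obtain ⟨O, hOU, hO, hxO⟩ := mem_nhds_iff.1 hU
    exact ⟨O, hO, Subset.antisymm (fun y hy => hUB y ⟨hOU hy.1, hy.2⟩)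
      (singleton_subset_iff.2 ⟨hxO, hx⟩)⟩

theorem isScattered_iff_forall_not_preperfect {X : Set α} :
    IsScattered X ↔ ∀ B ⊆ X, B.Nonempty → ¬Preperfect B := by
  simp only [IsScattered, Preperfect, not_forall, exists_prop]
  refine forall₂_congr fun B _ => imp_congr_right fun _ => exists_congr fun x => and_congr_right
    fun hx => exists_isOpen_inter_eq_singleton_iff_not_accPt hx

theorem IsScattered.countable [SecondCountableTopology α] {X : Set α} (hX : IsScattered X)
    (hXclosed : IsClosed X) : X.Countable := by
  by_contra hunc
  obtain ⟨D, hD, hDne, hDX⟩ := exists_perfect_nonempty_of_isClosed_of_not_countable hXclosed hunc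
  exact isScattered_iff_forall_not_preperfect.1 hX D hDX hDne hD.acc

theorem Perfect.not_countable [IsCompletelyMetrizableSpace α] {C : Set α} (hC : Perfect C)
    (hne : C.Nonempty) : ¬C.Countable := by
  let := upgradeIsCompletelyMetrizable α
  intro hct
  obtain ⟨f, hfC, -, hf⟩ := hC.exists_nat_bool_injection hne
  have : Countable (ℕ → Bool) := countable_univ_iff.1 (by simpa using (hct.mono hfC).preimage hf)
  have hcard : Cardinal.mk (ℕ → Bool) ≤ Cardinal.aleph0 := Cardinal.mk_le_aleph0
  rw [← Cardinal.power_def, Cardinal.mk_bool, Cardinal.mk_nat, Cardinal.two_power_aleph0] at hcard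
  exact Cardinal.aleph0_lt_continuum.not_ge hcard

theorem Set.Countable.isScattered [IsCompletelyMetrizableSpace α] {X : Set α} (hX : X.Countable)
    (hXclosed : IsClosed X) : IsScattered X := by
  refine isScattered_iff_forall_not_preperfect.2 fun B hBX hBne hB => ?_
  exact hB.perfect_closure.not_countable (hBne.mono subset_closure)
    (hX.mono (hXclosed.closure_subset_iff.2 hBX))

theorem IsClosed.isScattered_iff_countable [PolishSpace α] {X : Set α} (hX : IsClosed X) :
    IsScattered X ↔ X.Countable :=
  ⟨fun h => h.countable hX, fun h => h.isScattered hX⟩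

end Scattered

section Translations

variable {S A : Type*} [TopologicalSpace A]

/-- `T` indexes the basic entourage of agreement on the coordinates `T` of `S → A`, so this says
that the translations `x ↦ (t ↦ x (t * s))`, `s ∈ S`, form a fragmented family on `X`. -/
def TranslationsFragmented [Mul S] (X : Set (S → A)) : Prop :=
  ∀ B ⊆ X, B.Nonempty → ∀ T : Finset S,
    ∃ O : Set (S → A), IsOpen O ∧ (O ∩ B).Nonempty ∧
      ∀ s : S, ∀ t ∈ T, ∀ x ∈ O ∩ B, ∀ y ∈ O ∩ B, x (t * s) = y (t * s)

theorem translationsFragmented_iff_isScattered [MulOneClass S] (X : Set (S → A)) :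
    TranslationsFragmented X ↔ IsScattered X := by
  constructor
  · intro h B hBX hBne
    obtain ⟨O, hO, ⟨x, hx⟩, hagree⟩ := h B hBX hBne {1}
    have hsub : (O ∩ B).Subsingleton := fun y hy z hz =>
      funext fun s => by simpa using hagree s 1 (Finset.mem_singleton_self 1) y hy z hz
    exact ⟨x, hx.2, O, hO, hsub.eq_singleton_of_mem hx⟩
  · intro h B hBX hBne T
    obtain ⟨x, hx, O, hO, hOB⟩ := h B hBX hBne
    refine ⟨O, hO, hOB ▸ singleton_nonempty x, fun s t _ y hy z hz => ?_⟩
    rw [hOB] at hy hz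
    rw [hy, hz]

end Translations

theorem stmt4_general {S A : Type*} [Monoid S] [Finite A] [TopologicalSpace A] [DiscreteTopology A]
    (X : Set (S → A)) (hXclosed : IsClosed X) :
    -- (the family of translations is a fragmented family w.r.t. the product uniformity)
    -- ↔ (`X` is scattered)
    ((∀ B ⊆ X, B.Nonempty → ∀ T : Finset S,
        ∃ O : Set (S → A), IsOpen O ∧ (O ∩ B).Nonempty ∧
          ∀ s : S, ∀ t ∈ T, ∀ x ∈ O ∩ B, ∀ y ∈ O ∩ B, x (t * s) = y (t * s)) ↔
      (∀ B ⊆ X, B.Nonempty → ∃ x ∈ B, ∃ O : Set (S → A), IsOpen O ∧ O ∩ B = {x})) ∧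
    -- moreover, if `S` is countable these are equivalent to `X` being countable
    (Countable S →
      ((∀ B ⊆ X, B.Nonempty → ∀ T : Finset S,
          ∃ O : Set (S → A), IsOpen O ∧ (O ∩ B).Nonempty ∧
            ∀ s : S, ∀ t ∈ T, ∀ x ∈ O ∩ B, ∀ y ∈ O ∩ B, x (t * s) = y (t * s)) ↔
        X.Countable)) := by
  have hfrag := translationsFragmented_iff_isScattered X
  refine ⟨hfrag, fun _ => ?_⟩
  have : PolishSpace (S → A) := {}
  exact hfrag.trans hXclosed.isScattered_iff_countable

theorem stmt4 {S A : Type*} [Monoid S] [Finite A] [TopologicalSpace A] [DiscreteTopology A]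
    (X : Set (S → A)) (hXclosed : IsClosed X)
    (hXinv : ∀ s : S, ∀ ω ∈ X, (fun t => ω (t * s)) ∈ X) :
    -- (the family of translations is a fragmented family w.r.t. the product uniformity)
    -- ↔ (`X` is scattered)
    ((∀ B ⊆ X, B.Nonempty → ∀ T : Finset S,
        ∃ O : Set (S → A), IsOpen O ∧ (O ∩ B).Nonempty ∧
          ∀ s : S, ∀ t ∈ T, ∀ x ∈ O ∩ B, ∀ y ∈ O ∩ B, x (t * s) = y (t * s)) ↔
      (∀ B ⊆ X, B.Nonempty → ∃ x ∈ B, ∃ O : Set (S → A), IsOpen O ∧ O ∩ B = {x})) ∧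
    -- moreover, if `S` is countable these are equivalent to `X` being countable
    (Countable S →
      ((∀ B ⊆ X, B.Nonempty → ∀ T : Finset S,
          ∃ O : Set (S → A), IsOpen O ∧ (O ∩ B).Nonempty ∧
            ∀ s : S, ∀ t ∈ T, ∀ x ∈ O ∩ B, ∀ y ∈ O ∩ B, x (t * s) = y (t * s)) ↔
        X.Countable)) :=
  stmt4_general X hXclosed
end

section
/- Let S be a monoid, A = {0, 1, …, d} a finite alphabet regarded as a subset of ℝ with the discrete topology, and X ⊆ A^S a subshift, i.e. a closed subset of A^S invariant under the shift action (s·ω)(t) = ω(ts). Then the following are equivalent: (1) the dynamical system (S, X) is tame, i.e. for every continuous function f : X → ℝ the family {x ↦ f(s·x) : s ∈ S} contains no independent sequence; (2) for every infinite subset L ⊆ S there exists an infinite subset K ⊆ L such that the restriction image π_K(X) := {x|_K : x ∈ X} is a countable subset of A^K. -/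
/-!
(2) ⇒ (1). A continuous `f` on the compact set `X` is determined up to `b - a` by the coordinates
in a finite set `F`. Refining the indices of an independent sequence `f(s n · x)` to an infinite
set `N` with `π_G(X)` countable for `G = F · s(N)`, compactness realises every pattern `σ ∈ 2^N`
by a point of `X`, and different patterns force different restrictions to `G`: `2^N` would inject
into a countable set.

(1) ⇒ (2). Suppose every infinite `K ⊆ L` has `π_K(X)` uncountable. Since `π_K(X)` embeds into the
product over the finitely many symbols `a` of the projections of the Boolean sets
`{s ↦ [x(s) = a] : x ∈ X}`, one of these Boolean sets has the same property on an infinite subset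
of `L`. For such a Boolean set `Z`, a fusion argument chooses coordinates one at a time so that all
cylinders over the chosen coordinates keep the property; the new coordinate must split all of them
at once, and if no coordinate did, a diagonal sequence of coordinates `n_j`, on each of which a
fixed cylinder's fibre `{z(n_j) = b}` has countable projection, would make that cylinder's
projection to `{n_j}` countable. The chosen coordinates form an infinite set `M` all of whose finite
subsets are shattered by `Z`, and `f(x) = [x(1) = a]` gives an independent sequence along `M`.
-/

open Set Function Filter Topology

theorem exists_seq_of_forall_exists_step {α : Type*} {p : α → Prop} {r : α → α → Prop} {a : α}
    (ha : p a) (h : ∀ x, p x → ∃ y, p y ∧ r x y) :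
    ∃ f : ℕ → α, ∀ n, p (f n) ∧ r (f n) (f (n + 1)) := by
  choose g hg using h
  let step : {x // p x} → {x // p x} := fun x => ⟨g x.1 x.2, (hg x.1 x.2).1⟩
  refine ⟨fun n => (step^[n] ⟨a, ha⟩).1, fun n => ⟨(step^[n] ⟨a, ha⟩).2, ?_⟩⟩
  simp only [iterate_succ_apply']
  exact (hg _ _).2

theorem exists_infinite_subset_forall_mem_finset {α ι : Type*} (s : Finset ι)
    {p : ι → Set α → Prop} (hp : ∀ i ⦃M M' : Set α⦄, M' ⊆ M → p i M → p i M')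
    {R : Set α} (hR : R.Infinite)
    (h : ∀ i ∈ s, ∀ R' ⊆ R, R'.Infinite → ∃ M ⊆ R', M.Infinite ∧ p i M) :
    ∃ M ⊆ R, M.Infinite ∧ ∀ i ∈ s, p i M := by
  classical
  induction s using Finset.induction_on with
  | empty => exact ⟨R, subset_rfl, hR, by simp⟩
  | insert i s _ ih =>
    obtain ⟨M₁, hM₁R, hM₁, hs⟩ := ih fun j hj => h j (Finset.mem_insert_of_mem hj)
    obtain ⟨M, hMM₁, hM, hi⟩ := h i (Finset.mem_insert_self i s) M₁ hM₁R hM₁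
    exact ⟨M, hMM₁.trans hM₁R, hM,
      (Finset.forall_mem_insert _ _ _).2 ⟨hi, fun j hj => hp j hMM₁ (hs j hj)⟩⟩

theorem uncountable_fun_bool (α : Type*) [Infinite α] : Uncountable (α → Bool) := by
  rw [← Cardinal.aleph0_lt_mk_iff, Cardinal.mk_arrow]
  simpa using (Cardinal.cantor _).trans_le
    (Cardinal.power_le_power_left two_ne_zero (Cardinal.infinite_iff.1 ‹_›))

section Combinatorics

variable {S β : Type*} {Z : Set (S → β)}

theorem countable_domRestrict_image_mono {M M' : Set S} (h : M' ⊆ M)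
    (hc : (M.domRestrict '' Z).Countable) : (M'.domRestrict '' Z).Countable := by
  rw [← domRestrict₂_comp_domRestrict h, image_comp]
  exact hc.image _

theorem Set.Finite.countable_domRestrict_image [Finite β] {M : Set S} (hM : M.Finite)
    (Z : Set (S → β)) : (M.domRestrict '' Z).Countable :=
  have := hM.to_subtype
  (toFinite _).countable

theorem countable_domRestrict_image_union {M₁ M₂ : Set S}
    (h₁ : (M₁.domRestrict '' Z).Countable) (h₂ : (M₂.domRestrict '' Z).Countable) :
    ((M₁ ∪ M₂).domRestrict '' Z).Countable := by
  have hinj : Injective fun y : ↥(M₁ ∪ M₂) → β =>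
      (domRestrict₂ (π := fun _ => β) subset_union_left y,
        domRestrict₂ (π := fun _ => β) subset_union_right y) := by
    intro y y' h
    funext ⟨u, hu⟩
    rcases hu with hu | hu
    · exact congrFun (congrArg Prod.fst h) ⟨u, hu⟩
    · exact congrFun (congrArg Prod.snd h) ⟨u, hu⟩
  refine ((h₁.prod h₂).preimage hinj).mono ?_
  rintro _ ⟨z, hz, rfl⟩
  exact ⟨⟨z, hz, rfl⟩, ⟨z, hz, rfl⟩⟩

theorem countable_domRestrict_image_biUnion {ι : Type*} {F : Finset ι} {M : ι → Set S}
    (h : ∀ i ∈ F, ((M i).domRestrict '' Z).Countable) :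
    ((⋃ i ∈ F, M i).domRestrict '' Z).Countable := by
  classical
  induction F using Finset.induction_on with
  | empty =>
    rw [show (⋃ i ∈ (∅ : Finset ι), M i) = ∅ by simp]
    exact subsingleton_of_subsingleton.countable
  | insert i F _ ih =>
    rw [Finset.set_biUnion_insert]
    exact countable_domRestrict_image_union (h i (Finset.mem_insert_self i F))
      (ih fun j hj => h j (Finset.mem_insert_of_mem hj))

theorem exists_infinite_subset_countable_domRestrict_image [Finite β]
    (hZ : ∀ L : Set S, L.Infinite → ∃ K ⊆ L, K.Infinite ∧ (K.domRestrict '' Z).Countable)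
    (g : ℕ → S) {N : Set ℕ} (hN : N.Infinite) :
    ∃ N' ⊆ N, N'.Infinite ∧ ((g '' N').domRestrict '' Z).Countable := by
  by_cases hfin : (g '' N).Finite
  · exact ⟨N, subset_rfl, hN, hfin.countable_domRestrict_image Z⟩
  obtain ⟨K, hK, hKinf, hKc⟩ := hZ _ hfin
  have himage : g '' (N ∩ g ⁻¹' K) = K := by rw [image_inter_preimage, inter_eq_right.2 hK]
  refine ⟨N ∩ g ⁻¹' K, inter_subset_left, fun h => hKinf (himage ▸ h.image g), ?_⟩
  rwa [himage]

def HereditarilyUncountable (Z : Set (S → β)) (R : Set S) : Prop :=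
  ∀ M ⊆ R, M.Infinite → ¬(M.domRestrict '' Z).Countable

theorem HereditarilyUncountable.nonempty {R : Set S}
    (h : HereditarilyUncountable Z R) (hR : R.Infinite) : Z.Nonempty :=
  nonempty_iff_ne_empty.2 fun hZ => h R subset_rfl hR (by simp [hZ])

theorem countable_domRestrict_image_range_of_fibers {Z : Set (S → Bool)} {n : ℕ → S}
    {U : ℕ → Set S} {b : Bool} (hnU : ∀ j l, j < l → n l ∈ U j)
    (hU : ∀ j, ((U j).domRestrict '' {z ∈ Z | z (n j) = b}).Countable) :
    ((range n).domRestrict '' Z).Countable := by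
  have hfiber : ∀ j, ((range n).domRestrict '' {z ∈ Z | z (n j) = b}).Countable := by
    intro j
    refine countable_domRestrict_image_mono ?_ (countable_domRestrict_image_union
      (((finite_Iic j).image n).countable_domRestrict_image _) (hU j))
    rintro _ ⟨l, rfl⟩
    rcases le_or_gt l j with hl | hl
    · exact Or.inl ⟨l, hl, rfl⟩
    · exact Or.inr (hnU j l hl)
  -- a point of `Z` lying in no fiber takes the constant value `!b` on `range n`
  refine ((countable_singleton fun _ => !b).union (countable_iUnion hfiber)).mono ?_
  rintro _ ⟨z, hz, rfl⟩
  by_cases hb : ∃ j, z (n j) = b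
  · obtain ⟨j, hj⟩ := hb
    exact Or.inr (mem_iUnion.2 ⟨j, z, ⟨hz, hj⟩, rfl⟩)
  · refine Or.inl (funext ?_)
    rintro ⟨_, j, rfl⟩
    simpa [Bool.eq_not] using not_exists.1 hb j

theorem HereditarilyUncountable.exists_split {ι : Type*} [Finite ι] {Z : ι → Set (S → Bool)}
    {T : Set S} (hT : T.Infinite) (h : ∀ i, HereditarilyUncountable (Z i) T) :
    ∃ n ∈ T, ∃ T' ⊆ T \ {n}, T'.Infinite ∧
      ∀ i b, HereditarilyUncountable {z ∈ Z i | z n = b} T' := by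
  by_contra! hno
  have step : ∀ V ⊆ T, V.Infinite → ∃ V', (V' ⊆ T ∧ V'.Infinite) ∧ ∃ n ∈ V, ∃ c : ι × Bool,
      V' ⊆ V \ {n} ∧ (V'.domRestrict '' {z ∈ Z c.1 | z n = c.2}).Countable := by
    intro V hVT hV
    obtain ⟨n, hn⟩ := hV.nonempty
    obtain ⟨i, b, hib⟩ := hno n (hVT hn) (V \ {n}) (sdiff_subset_sdiff_left hVT)
      (hV.sdiff (finite_singleton n))
    simp only [HereditarilyUncountable, not_forall, not_not] at hib
    obtain ⟨V', hV'V, hV', hc⟩ := hib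
    exact ⟨V', ⟨hV'V.trans (sdiff_subset.trans hVT), hV'⟩, n, hn, (i, b), hV'V, hc⟩
  obtain ⟨V, hV⟩ := exists_seq_of_forall_exists_step (p := fun V => V ⊆ T ∧ V.Infinite)
    ⟨subset_rfl, hT⟩ fun V hV => step V hV.1 hV.2
  choose n hn c hVsub hc using fun j => (hV j).2
  have hanti : Antitone V := antitone_nat_of_succ_le fun j => (hVsub j).trans sdiff_subset
  have hnV : ∀ j l, j < l → n l ∈ V (j + 1) := fun j l hjl => hanti hjl (hn l)
  have hninj : Injective n := Injective.of_lt_imp_ne fun j l hjl hnjl =>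
    (hVsub j (hnV j l hjl)).2 hnjl.symm
  obtain ⟨c₀, hc₀⟩ := Finite.exists_infinite_fiber c
  obtain ⟨φ, hφ, hφc⟩ := Nat.exists_strictMono_subsequence (P := fun j => c j = c₀)
    fun N => let ⟨j, hj, hNj⟩ := (infinite_coe_iff.1 hc₀).exists_gt N; ⟨j, hNj, hj⟩
  refine h c₀.1 (range (n ∘ φ)) ?_ (infinite_range_of_injective (hninj.comp hφ.injective))
    (countable_domRestrict_image_range_of_fibers (U := fun j => V (φ j + 1)) (b := c₀.2)
      (fun j l hjl => hnV _ _ (hφ hjl)) fun j => hφc j ▸ hc (φ j))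
  rintro _ ⟨j, rfl⟩
  exact (hV _).1.1 (hn _)

def cylinder (Z : Set (S → β)) (F : Finset S) (σ : S → β) : Set (S → β) :=
  {z ∈ Z | ∀ u ∈ F, z u = σ u}

theorem finite_range_cylinder [Finite β] (Z : Set (S → β)) (F : Finset S) :
    (range (cylinder Z F)).Finite :=
  (finite_range fun τ : ↥F → β => {z ∈ Z | ∀ u : ↥F, z u = τ u}).subset <| by
    rintro _ ⟨σ, rfl⟩
    exact ⟨fun u => σ u, by ext; simp [cylinder]⟩

theorem cylinder_insert [DecidableEq S] (Z : Set (S → β)) (F : Finset S) (n : S) (σ : S → β) :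
    cylinder Z (insert n F) σ = {z ∈ cylinder Z F σ | z n = σ n} := by
  ext z
  simp only [cylinder, Finset.forall_mem_insert, mem_ofPred_eq]
  tauto

def ShattersFiniteSubsets (Z : Set (S → β)) (M : Set S) : Prop :=
  ∀ F : Finset S, ↑F ⊆ M → ∀ σ : S → β, (cylinder Z F σ).Nonempty

theorem exists_hereditarilyUncountable_cylinder_insert [DecidableEq S] {Z : Set (S → Bool)}
    {F : Finset S} {T : Set S} (hT : T.Infinite)
    (h : ∀ σ, HereditarilyUncountable (cylinder Z F σ) T) :
    ∃ n ∈ T, ∃ T' ⊆ T \ {n}, T'.Infinite ∧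
      ∀ σ, HereditarilyUncountable (cylinder Z (insert n F) σ) T' := by
  have := (finite_range_cylinder Z F).to_subtype
  obtain ⟨n, hn, T', hT'T, hT', hsplit⟩ :=
    HereditarilyUncountable.exists_split (Z := ((↑) : range (cylinder Z F) → Set (S → Bool)))
      hT (by rintro ⟨_, σ, rfl⟩; exact h σ)
  refine ⟨n, hn, T', hT'T, hT', fun σ => ?_⟩
  rw [cylinder_insert]
  exact hsplit ⟨_, σ, rfl⟩ (σ n)

theorem HereditarilyUncountable.exists_shattersFiniteSubsets {Z : Set (S → Bool)} {R : Set S}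
    (hR : R.Infinite) (h : HereditarilyUncountable Z R) :
    ∃ M ⊆ R, M.Infinite ∧ ShattersFiniteSubsets Z M := by
  classical
  let Inv (q : Finset S × Set S) : Prop := ↑q.1 ⊆ R ∧ q.2 ⊆ R ∧ Disjoint (↑q.1 : Set S) q.2 ∧
    q.2.Infinite ∧ ∀ σ, HereditarilyUncountable (cylinder Z q.1 σ) q.2
  have step : ∀ q, Inv q → ∃ q', Inv q' ∧ q.1 ⊂ q'.1 := by
    rintro ⟨F, T⟩ ⟨hFR, hTR, hdisj, hT, hcyl⟩
    obtain ⟨n, hn, T', hT'T, hT', hcyl'⟩ := exists_hereditarilyUncountable_cylinder_insert hT hcyl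
    refine ⟨(insert n F, T'), ⟨?_, hT'T.trans (sdiff_subset.trans hTR), ?_, hT', hcyl'⟩,
      Finset.ssubset_insert fun h => disjoint_left.1 hdisj h hn⟩
    · simpa [insert_subset_iff] using ⟨hTR hn, hFR⟩
    · simp only [Finset.coe_insert, disjoint_insert_left]
      exact ⟨fun h => (hT'T h).2 rfl, hdisj.mono_right (hT'T.trans sdiff_subset)⟩
  obtain ⟨F, hF⟩ := exists_seq_of_forall_exists_step (a := (∅, R))
    ⟨by simp, subset_rfl, by simp, hR, fun σ => by simpa [cylinder] using h⟩ step
  have hmono : StrictMono fun k => (F k).1 := strictMono_nat_of_lt_succ fun k => (hF k).2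
  refine ⟨⋃ k, ↑(F k).1, iUnion_subset fun k => (hF k).1.1, fun hfin => ?_, fun P hP σ => ?_⟩
  · refine infinite_range_of_injective hmono.injective
      (hfin.toFinset.powerset.finite_toSet.subset ?_)
    rintro _ ⟨k, rfl⟩
    simpa using subset_iUnion (fun k => (↑(F k).1 : Set S)) k
  · have hdir : Directed (· ⊆ ·) fun k => (↑(F k).1 : Set S) :=
      Monotone.directed_le fun j k hjk => Finset.coe_subset.2 (hmono.monotone hjk)
    obtain ⟨k, hk⟩ := hdir.exists_mem_subset_of_finset_subset_biUnion hP
    obtain ⟨z, hz, hzσ⟩ := ((hF k).1.2.2.2.2 σ).nonempty (hF k).1.2.2.2.1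
    exact ⟨z, hz, fun u hu => hzσ u (hk hu)⟩

end Combinatorics

section Indicator

variable {S A : Type*} [DecidableEq A]

def indicatorImage (Z : Set (S → A)) (a : A) : Set (S → Bool) :=
  (fun z s => decide (z s = a)) '' Z

theorem countable_domRestrict_image_of_indicatorImage [Finite A] {Z : Set (S → A)} {M : Set S}
    (h : ∀ a, (M.domRestrict '' indicatorImage Z a).Countable) :
    (M.domRestrict '' Z).Countable := by
  have hinj : Injective fun (y : ↥M → A) (a : A) (u : ↥M) => decide (y u = a) := by
    intro y y' hyy'
    funext u
    simpa [eq_comm] using congrFun (congrFun hyy' (y u)) u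
  refine ((countable_univ_pi h).preimage hinj).mono ?_
  rintro _ ⟨z, hz, rfl⟩ a -
  exact ⟨_, ⟨z, hz, rfl⟩, rfl⟩

theorem HereditarilyUncountable.exists_indicatorImage [Finite A] {Z : Set (S → A)} {R : Set S}
    (hR : R.Infinite) (h : HereditarilyUncountable Z R) :
    ∃ a, ∃ R' ⊆ R, R'.Infinite ∧ HereditarilyUncountable (indicatorImage Z a) R' := by
  by_contra! hno
  have := Fintype.ofFinite A
  obtain ⟨M, hMR, hM, hc⟩ := exists_infinite_subset_forall_mem_finset Finset.univ
    (p := fun a M => (M.domRestrict '' indicatorImage Z a).Countable)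
    (fun _ _ _ => countable_domRestrict_image_mono) hR fun a _ R' hR'R hR' => by
      simpa [HereditarilyUncountable] using hno a R' hR'R hR'
  exact h M hMR hM (countable_domRestrict_image_of_indicatorImage fun a => hc a (Finset.mem_univ a))

end Indicator

section Topology

variable {S A : Type*} [TopologicalSpace A] {X : Set (S → A)}

theorem IsCompact.exists_finset_eqOn_abs_sub_lt (hX : IsCompact X) {f : X → ℝ}
    (hf : Continuous f) {ε : ℝ} (hε : 0 < ε) :
    ∃ F : Finset S, ∀ x y : X, EqOn (x : S → A) y ↑F → |f x - f y| < ε := by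
  classical
  have : CompactSpace X := isCompact_iff_compactSpace.1 hX
  have hloc : ∀ x : X, ∃ (I : Finset S) (u : S → Set A), (∀ t, u t ∈ 𝓝 ((x : S → A) t)) ∧
      ∀ y : X, (∀ t ∈ I, (y : S → A) t ∈ u t) → |f y - f x| < ε / 2 := by
    intro x
    have hx : f ⁻¹' Metric.ball (f x) (ε / 2) ∈ 𝓝 x :=
      hf.continuousAt (Metric.ball_mem_nhds _ (half_pos hε))
    rw [nhds_subtype, mem_comap, nhds_pi] at hx
    obtain ⟨V, hV, hVf⟩ := hx
    obtain ⟨I, u, hu, hIu⟩ := Filter.mem_pi'.1 hV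
    exact ⟨I, u, hu, fun y hy => hVf (hIu hy)⟩
  choose I u hu hIu using hloc
  let U (x : X) : Set X := {y | ∀ t ∈ I x, (y : S → A) t ∈ u x t}
  have hU : ∀ x, U x ∈ 𝓝 x := fun x => mem_of_superset ((biInter_finset_mem (I x)).2 fun t _ =>
    ((continuous_apply t).comp continuous_subtype_val).continuousAt.preimage_mem_nhds (hu x t))
    fun y hy => by simpa [U] using hy
  obtain ⟨C, -, hC⟩ := isCompact_univ.elim_nhds_subcover U fun x _ => hU x
  refine ⟨C.biUnion I, fun x y hxy => ?_⟩
  obtain ⟨x₀, hx₀, hx⟩ := mem_iUnion₂.1 (hC (mem_univ x))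
  have hy : y ∈ U x₀ := fun t ht => hxy (Finset.mem_biUnion.2 ⟨x₀, hx₀, ht⟩) ▸ hx t ht
  have hx₀x := hIu x₀ x hx
  have hx₀y := hIu x₀ y hy
  calc |f x - f y| ≤ |f x - f x₀| + |f x₀ - f y| := abs_sub_le _ _ _
    _ < ε := by rw [abs_sub_comm (f x₀)]; linarith

theorem exists_forall_ite_le_of_independent {Z : Type*} [TopologicalSpace Z] [CompactSpace Z]
    {g : ℕ → Z → ℝ} (hg : ∀ n, Continuous (g n)) {a b : ℝ}
    (h : ∀ P M : Finset ℕ, Disjoint P M →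
      ((⋂ n ∈ P, {z | g n z < a}) ∩ ⋂ n ∈ M, {z | b < g n z}).Nonempty)
    (σ : ℕ → Bool) : ∃ z, ∀ n, if σ n then b ≤ g n z else g n z ≤ a := by
  let t (n : ℕ) : Set Z := {z | if σ n then b ≤ g n z else g n z ≤ a}
  have ht : ∀ n, IsClosed (t n) := fun n => by
    cases hσ : σ n <;> simp only [t, hσ, Bool.false_eq_true, if_false, if_true]
    · exact isClosed_le (hg n) continuous_const
    · exact isClosed_le continuous_const (hg n)
  obtain ⟨z, -, hz⟩ := isCompact_univ.inter_iInter_nonempty t ht fun u => by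
    obtain ⟨z, hP, hM⟩ := h (u.filter (σ · = false)) (u.filter (σ · = true))
      (Finset.disjoint_filter.2 fun _ _ h => by simp [h])
    refine ⟨z, mem_univ z, mem_iInter₂.2 fun n hn => ?_⟩
    cases hσ : σ n
    · simpa [t, hσ] using (mem_iInter₂.1 hP n (by simp [hn, hσ])).le
    · simpa [t, hσ] using (mem_iInter₂.1 hM n (by simp [hn, hσ])).le
  exact ⟨z, mem_iInter.1 hz⟩

end Topology

section Dynamics

variable {S A : Type*} [Monoid S] [TopologicalSpace A] {X : Set (S → A)}

theorem exists_isIndependentSeq_of_hereditarilyUncountable [DiscreteTopology A] [Finite A]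
    (hXinv : ∀ s : S, ∀ ω ∈ X, (fun t => ω (t * s)) ∈ X) {L : Set S} (hL : L.Infinite)
    (h : HereditarilyUncountable X L) :
    ∃ f : X → ℝ, Continuous f ∧ ∃ s : ℕ → S, IsIndependentSeq fun n (x : X) =>
      f ⟨fun t => (x : S → A) (t * s n), hXinv (s n) x x.2⟩ := by
  classical
  obtain ⟨a, R, -, hR, hRa⟩ := h.exists_indicatorImage hL
  obtain ⟨M, -, hM, hshatters⟩ := hRa.exists_shattersFiniteSubsets hR
  let s : ℕ → S := fun n => hM.natEmbedding _ n
  have hs : Injective s := Subtype.val_injective.comp (hM.natEmbedding _).injective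
  refine ⟨fun x => if (x : S → A) 1 = a then 1 else 0,
    (continuous_of_discreteTopology (f := fun b : A => if b = a then (1 : ℝ) else 0)).comp
      ((continuous_apply 1).comp continuous_subtype_val),
    s, 1 / 3, 2 / 3, by norm_num, fun P Q hPQ => ?_⟩
  obtain ⟨_, ⟨⟨z, hz, rfl⟩, hzσ⟩⟩ := hshatters ((P ∪ Q).image s)
    (by rw [Finset.coe_image]; exact image_subset_iff.2 fun n _ => (hM.natEmbedding _ n).2)
    fun u => decide (u ∈ Q.image s)
  have hzQ : ∀ n ∈ P ∪ Q, (z (s n) = a ↔ n ∈ Q) := fun n hn => by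
    simpa [hs.eq_iff] using hzσ (s n) (Finset.mem_image_of_mem s hn)
  refine ⟨⟨z, hz⟩, mem_iInter₂.2 fun n hn => ?_, mem_iInter₂.2 fun n hn => ?_⟩
  · have : z (s n) ≠ a := fun h => Finset.disjoint_left.1 hPQ hn
      ((hzQ n (Finset.mem_union_left Q hn)).1 h)
    show (if z (1 * s n) = a then (1 : ℝ) else 0) < 1 / 3
    rw [one_mul, if_neg this]
    norm_num
  · show 2 / 3 < (if z (1 * s n) = a then (1 : ℝ) else 0)
    rw [one_mul, if_pos ((hzQ n (Finset.mem_union_right P hn)).2 hn)]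
    norm_num

theorem not_isIndependentSeq_of_countable_domRestrict_image [Finite A] (hX : IsCompact X)
    (hXinv : ∀ s : S, ∀ ω ∈ X, (fun t => ω (t * s)) ∈ X)
    (hXK : ∀ L : Set S, L.Infinite → ∃ K ⊆ L, K.Infinite ∧ (K.domRestrict '' X).Countable)
    {f : X → ℝ} (hf : Continuous f) (s : ℕ → S) :
    ¬IsIndependentSeq fun n (x : X) => f ⟨fun t => (x : S → A) (t * s n), hXinv (s n) x x.2⟩ := by
  classical
  rintro ⟨a, b, hab, hind⟩
  have : CompactSpace X := isCompact_iff_compactSpace.1 hX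
  let shift (n : ℕ) (x : X) : X := ⟨fun t => (x : S → A) (t * s n), hXinv (s n) x x.2⟩
  have hshift : ∀ n, Continuous (shift n) := fun n =>
    have : Continuous fun (x : X) (t : S) => (x : S → A) (t * s n) :=
      continuous_pi fun t => (continuous_apply (t * s n)).comp continuous_subtype_val
    this.subtype_mk _
  obtain ⟨F, hF⟩ := hX.exists_finset_eqOn_abs_sub_lt hf (sub_pos.2 hab)
  obtain ⟨N, -, hN, hNc⟩ := exists_infinite_subset_forall_mem_finset F
    (p := fun t N => (((t * s ·) '' N).domRestrict '' X).Countable)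
    (fun _ _ _ h => countable_domRestrict_image_mono (image_mono h)) infinite_univ
    fun t _ N' _ hN' => exists_infinite_subset_countable_domRestrict_image hXK _ hN'
  let G := ⋃ t ∈ F, (t * s ·) '' N
  have hG : (G.domRestrict '' X).Countable := countable_domRestrict_image_biUnion hNc
  choose w hw using exists_forall_ite_le_of_independent (fun n => hf.comp (hshift n)) hind
  have hpattern : ∀ σ τ, EqOn (w σ : S → A) (w τ) G → ∀ n ∈ N, σ n = τ n := by
    intro σ τ hστ n hn
    have hclose := hF (shift n (w σ)) (shift n (w τ)) fun t ht =>
      hστ (mem_biUnion ht ⟨n, hn, rfl⟩)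
    rw [abs_lt] at hclose
    have hσ := hw σ n
    have hτ := hw τ n
    simp only [comp_apply] at hσ hτ
    by_contra hne
    cases hσn : σ n <;> cases hτn : τ n <;>
      simp only [hσn, hτn, Bool.false_eq_true, if_false, if_true, not_true_eq_false]
        at hσ hτ hne <;>
      linarith
  let ext (σ : N → Bool) (n : ℕ) : Bool := if h : n ∈ N then σ ⟨n, h⟩ else false
  have hinj : Injective fun σ : N → Bool =>
      (⟨G.domRestrict (w (ext σ) : S → A), w (ext σ), (w (ext σ)).2, rfl⟩ :
        G.domRestrict '' X) := by
    intro σ τ hστ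
    funext ⟨n, hn⟩
    simpa [ext, hn] using hpattern (ext σ) (ext τ)
      (fun u hu => congrFun (congrArg Subtype.val hστ) ⟨u, hu⟩) n hn
  have := hN.to_subtype
  have := hG.to_subtype
  exact (uncountable_fun_bool N).not_countable hinj.countable

end Dynamics

theorem stmt5 {S : Type*} [Monoid S] (d : ℕ) (X : Set (S → Fin (d + 1)))
    (hXclosed : IsClosed X)
    (hXinv : ∀ s : S, ∀ ω ∈ X, (fun t => ω (t * s)) ∈ X) :
    -- (1) the subshift `(S, X)` is tame
    (∀ f : X → ℝ, Continuous f →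
      ¬ ∃ s : ℕ → S, IsIndependentSeq fun n (x : X) =>
          f ⟨fun t => (x : S → Fin (d + 1)) (t * s n), hXinv (s n) x x.2⟩) ↔
    -- (2) for every infinite `L ⊆ S` there is an infinite `K ⊆ L` with `π_K(X)` countable
    (∀ L : Set S, L.Infinite → ∃ K ⊆ L, K.Infinite ∧
      Set.Countable ((fun (ω : S → Fin (d + 1)) => fun k : K => ω k) '' X)) := by
  refine ⟨fun htame L hL => ?_, fun hXK f hf ⟨s, hs⟩ =>
    not_isIndependentSeq_of_countable_domRestrict_image hXclosed.isCompact hXinv hXK hf s hs⟩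
  by_contra! hL'
  obtain ⟨f, hf, s, hs⟩ := exists_isIndependentSeq_of_hereditarilyUncountable hXinv hL hL'
  exact htame f hf ⟨s, hs⟩
end

section
/- Let D ⊆ ℤ and let X_D ⊆ {0,1}^ℤ be the orbit closure of the indicator function χ_D of D under the shift ℤ-action (σ^m ω)(i) = ω(i + m). Then X_D is a countable set (equivalently, the subshift X_D is hereditarily nonsensitive/Asplund) if and only if there exists a countable set Y of ultrafilters on ℤ such that for every ultrafilter x on ℤ there exists y ∈ Y with: for all n ∈ ℤ, the set n + D := {n + d : d ∈ D} belongs to x if and only if it belongs to y. -/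
open scoped Classical

/-- The shift `σ^m` on `{0,1}^ℤ`: `(σ^m ω)(i) = ω (i + m)`. -/
def shiftZ (m : ℤ) (ω : ℤ → Bool) : ℤ → Bool := fun i => ω (i + m)

/-- The indicator function `χ_D : ℤ → {0,1}` of `D ⊆ ℤ`. -/
noncomputable def chiD (D : Set ℤ) : ℤ → Bool := fun i => decide (i ∈ D)

/-- The subshift `X_D ⊆ {0,1}^ℤ`: the orbit closure of `χ_D` under the shift. -/
noncomputable def XD (D : Set ℤ) : Set (ℤ → Bool) :=
  closure {ω | ∃ m : ℤ, ω = shiftZ m (chiD D)}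

/-- The map sending an ultrafilter `x` on `ℤ` to the corresponding limit point of the orbit. -/
noncomputable def Phi (D : Set ℤ) (x : Ultrafilter ℤ) : ℤ → Bool :=
  fun i => decide ((fun d => -i + d) '' D ∈ x)

lemma Phi_continuous (D : Set ℤ) : Continuous (Phi D) := by
  apply continuous_pi
  intro i
  rw [continuous_discrete_rng]
  intro b
  cases b
  · convert ultrafilter_isOpen_basic (((fun d => -i + d) '' D)ᶜ)
    ext x
    simp [Phi, Ultrafilter.compl_mem_iff_notMem]
  · convert ultrafilter_isOpen_basic ((fun d => -i + d) '' D)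
    ext x
    simp [Phi]

lemma Phi_pure (D : Set ℤ) (m : ℤ) : Phi D (pure m) = shiftZ m (chiD D) := by
  funext i
  simp only [Phi, shiftZ, chiD, Ultrafilter.mem_pure]
  apply decide_eq_decide.mpr
  constructor
  · rintro ⟨d, hd, rfl⟩
    simpa using hd
  · intro h
    exact ⟨i + m, h, by ring⟩

lemma XD_eq (D : Set ℤ) : XD D = Set.range (Phi D) := by
  apply le_antisymm
  · apply closure_minimal
    · rintro ω ⟨m, rfl⟩
      exact ⟨pure m, Phi_pure D m⟩
    · exact (isCompact_range (Phi_continuous D)).isClosed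
  · have horb : Phi D '' Set.range (pure : ℤ → Ultrafilter ℤ)
        = {ω | ∃ m : ℤ, ω = shiftZ m (chiD D)} := by
      ext ω
      constructor
      · rintro ⟨x, ⟨m, rfl⟩, rfl⟩
        exact ⟨m, Phi_pure D m⟩
      · rintro ⟨m, rfl⟩
        exact ⟨pure m, ⟨m, rfl⟩, Phi_pure D m⟩
    calc Set.range (Phi D) = Phi D '' Set.univ := (Set.image_univ).symm
      _ = Phi D '' closure (Set.range (pure : ℤ → Ultrafilter ℤ)) := by
            rw [denseRange_pure.closure_eq]
      _ ⊆ closure (Phi D '' Set.range (pure : ℤ → Ultrafilter ℤ)) :=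
            image_closure_subset_closure_image (Phi_continuous D)
      _ = XD D := by rw [horb]; rfl

theorem stmt7 (D : Set ℤ) :
    -- `X_D` is countable (equivalently: `D` is an Asplund/HNS subset of `ℤ`) ↔
    (XD D).Countable ↔
    -- there is a countable set `Y` of ultrafilters on `ℤ` such that every ultrafilter
    -- `x` on `ℤ` agrees with some `y ∈ Y` about membership of `n + D` for all `n ∈ ℤ`
    (∃ Y : Set (Ultrafilter ℤ), Y.Countable ∧
      ∀ x : Ultrafilter ℤ, ∃ y ∈ Y, ∀ n : ℤ,
        ((fun d => n + d) '' D ∈ x ↔ (fun d => n + d) '' D ∈ y)) := by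
  rw [XD_eq]
  constructor
  · intro h
    set g : (ℤ → Bool) → Ultrafilter ℤ :=
      fun ω => if h : ∃ x, Phi D x = ω then h.choose else pure 0 with hg
    refine ⟨g '' Set.range (Phi D), h.image g, ?_⟩
    intro x
    have hx : ∃ x', Phi D x' = Phi D x := ⟨x, rfl⟩
    refine ⟨g (Phi D x), ⟨Phi D x, ⟨x, rfl⟩, rfl⟩, ?_⟩
    have hgx : Phi D (g (Phi D x)) = Phi D x := by
      rw [hg]; simp only [dif_pos hx]; exact hx.choose_spec
    intro n
    have := congrFun hgx (-n)
    simp only [Phi, neg_neg] at this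
    exact (decide_eq_decide.mp this).symm
  · rintro ⟨Y, hYc, hY⟩
    apply (hYc.image (Phi D)).mono
    rintro ω ⟨x, rfl⟩
    obtain ⟨y, hyY, hagree⟩ := hY x
    refine ⟨y, hyY, ?_⟩
    funext i
    exact decide_eq_decide.mpr (hagree (-i)).symm
end

section
/- Let X ⊆ {0,1}^ℤ be a subshift, i.e. a closed subset invariant under the shift (σ^m ω)(i) = ω(i + m). Then X is not tame — that is, there exists a continuous f : X → ℝ such that the family {x ↦ f(σ^m x) : m ∈ ℤ} contains an independent sequence — if and only if there exists an infinite subset A ⊆ ℤ on which X is free, i.e. {x|_A : x ∈ X} = {0,1}^A. -/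
namespace Stmt8NW

variable (Bad : Finset ℕ → Prop)

/-- `N` enters: it has a bad initial segment. -/
def Enters (N : Set ℕ) : Prop :=
  ∃ s : Finset ℕ, ↑s ⊆ N ∧ (∀ x ∈ N, x ∉ s → ∀ y ∈ s, y < x) ∧ Bad s

def Accepts (s : Finset ℕ) (M : Set ℕ) : Prop :=
  ∀ N : Set ℕ, N.Infinite → ↑s ⊆ N → N \ ↑s ⊆ M → Enters Bad N

def Rejects (s : Finset ℕ) (M : Set ℕ) : Prop :=
  ∀ M' ⊆ M, M'.Infinite → ¬ Accepts Bad s M'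

variable {Bad}

theorem Accepts.mono {s : Finset ℕ} {M M' : Set ℕ} (h : Accepts Bad s M) (hM : M' ⊆ M) :
    Accepts Bad s M' := fun N h1 h2 h3 => h N h1 h2 (h3.trans hM)

theorem Rejects.mono {s : Finset ℕ} {M M' : Set ℕ} (h : Rejects Bad s M) (hM : M' ⊆ M) :
    Rejects Bad s M' := fun W hW => h W (hW.trans hM)

theorem accepts_of_bad {s : Finset ℕ} {M : Set ℕ} (hb : Bad s)
    (hlt : ∀ y ∈ s, ∀ x ∈ M, y < x) : Accepts Bad s M := by
  intro N _ h2 h3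
  exact ⟨s, h2, fun x hx hxs y hy => hlt y hy x (h3 ⟨hx, by simpa using hxs⟩), hb⟩

theorem exists_accepts_of_not_rejects {s : Finset ℕ} {M : Set ℕ} (h : ¬ Rejects Bad s M) :
    ∃ M' ⊆ M, M'.Infinite ∧ Accepts Bad s M' := by
  simp only [Rejects, not_forall] at h
  obtain ⟨M', h1, h2, h3⟩ := h
  exact ⟨M', h1, h2, not_not.mp h3⟩

/-- Key step: given a pool `T` rejecting everything over `F`, we can pick `n ∈ T` and a
sub-pool rejecting everything over `F` together with `n`. -/
theorem step_lemma (F : Finset ℕ) (T : Set ℕ) (hT : T.Infinite)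
    (hrej : ∀ s ⊆ F, Rejects Bad s T) :
    ∃ n ∈ T, ∃ T' ⊆ T, T'.Infinite ∧ (∀ y ∈ T', n < y) ∧
      (∀ s ⊆ F, Rejects Bad (insert n s) T') := by
  by_contra hcon
  push_neg at hcon
  -- from the negation: a "key" step producing acceptances
  have key : ∀ U : Set ℕ, U ⊆ T → U.Infinite →
      ∃ (n : ℕ) (s : Finset ℕ) (W : Set ℕ), n ∈ U ∧ s ⊆ F ∧ W ⊆ U ∧ W.Infinite ∧
        (∀ y ∈ W, n < y) ∧ Accepts Bad (insert n s) W := by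
    intro U hUT hU
    obtain ⟨n, hn⟩ := hU.nonempty
    set T' : Set ℕ := U \ Set.Iic n with hT'def
    have hT' : T'.Infinite := hU.diff (Set.finite_Iic n)
    have hT'lt : ∀ y ∈ T', n < y := fun y hy => by
      have := hy.2; simpa using this
    obtain ⟨s, hsF, hnotrej⟩ := hcon n (hUT hn) T' (Set.diff_subset.trans hUT) hT' hT'lt
    obtain ⟨W, hWT', hW, hWacc⟩ := exists_accepts_of_not_rejects hnotrej
    exact ⟨n, s, W, hn, hsF, hWT'.trans Set.diff_subset, hW, fun y hy => hT'lt y (hWT' hy), hWacc⟩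
  -- iterate
  let Q := {U : Set ℕ // U ⊆ T ∧ U.Infinite}
  have key' : ∀ U : Q, ∃ p : ℕ × Finset ℕ × Q, p.1 ∈ U.1 ∧ p.2.1 ⊆ F ∧ p.2.2.1 ⊆ U.1 ∧
      (∀ y ∈ p.2.2.1, p.1 < y) ∧ Accepts Bad (insert p.1 p.2.1) p.2.2.1 := by
    intro U
    obtain ⟨n, s, W, h1, h2, h3, h4, h5, h6⟩ := key U.1 U.2.1 U.2.2
    exact ⟨⟨n, s, ⟨W, h3.trans U.2.1, h4⟩⟩, h1, h2, h3, h5, h6⟩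
  let step : Q → ℕ × Finset ℕ × Q := fun U => (key' U).choose
  let seqQ : ℕ → Q := fun i => Nat.rec ⟨T, le_refl T, hT⟩ (fun _ ih => (step ih).2.2) i
  have hseq : ∀ i, seqQ (i + 1) = (step (seqQ i)).2.2 := fun i => rfl
  let n : ℕ → ℕ := fun i => (step (seqQ i)).1
  let s : ℕ → Finset ℕ := fun i => (step (seqQ i)).2.1
  have hspec : ∀ i, n i ∈ (seqQ i).1 ∧ s i ⊆ F ∧ (seqQ (i+1)).1 ⊆ (seqQ i).1 ∧
      (∀ y ∈ (seqQ (i+1)).1, n i < y) ∧ Accepts Bad (insert (n i) (s i)) (seqQ (i+1)).1 := by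
    intro i
    have h := (key' (seqQ i)).choose_spec
    exact ⟨h.1, h.2.1, h.2.2.1, h.2.2.2.1, h.2.2.2.2⟩
  have hmono : ∀ i j, i ≤ j → (seqQ j).1 ⊆ (seqQ i).1 := by
    intro i j hij
    induction j with
    | zero => simp_all
    | succ k ih =>
      rcases Nat.lt_or_ge i (k+1) with h | h
      · exact ((hspec k).2.2.1).trans (ih (Nat.lt_succ_iff.mp h))
      · have : i = k + 1 := le_antisymm hij h
        subst this; exact le_refl _
  have hnmem : ∀ i j, i < j → n j ∈ (seqQ (i+1)).1 := by
    intro i j hij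
    exact hmono (i+1) j hij (hspec j).1
  have hnlt : ∀ i j, i < j → n i < n j := fun i j hij => (hspec i).2.2.2.1 _ (hnmem i j hij)
  have hninj : Function.Injective n := by
    intro i j hij
    rcases lt_trichotomy i j with h | h | h
    · exact absurd hij (hnlt i j h).ne
    · exact h
    · exact absurd hij.symm (hnlt j i h).ne
  -- pigeonhole on s
  have hpig : ∃ t : Finset ℕ, {i | s i = t}.Infinite := by
    by_contra hfin
    push_neg at hfin
    have : (Set.univ : Set ℕ) ⊆ ⋃ t ∈ F.powerset, {i | s i = t} := by
      intro i _
      simp only [Set.mem_iUnion]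
      exact ⟨s i, Finset.mem_powerset.mpr (hspec i).2.1, rfl⟩
    exact Set.infinite_univ (Set.Finite.subset (Set.Finite.biUnion (F.powerset.finite_toSet)
      (fun t _ => hfin t)) this)
  obtain ⟨sstar, hI⟩ := hpig
  set I := {i | s i = sstar} with hIdef
  have hsstarF : sstar ⊆ F := by
    obtain ⟨i, hi⟩ := hI.nonempty
    rw [← hi]; exact (hspec i).2.1
  -- W* accepts sstar
  have hWacc : Accepts Bad sstar (n '' I) := by
    intro N hN hsN hdiff
    have hDinf : (N \ ↑sstar).Infinite := hN.diff sstar.finite_toSet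
    have hDne : ∃ i, i ∈ I ∧ n i ∈ N \ ↑sstar := by
      obtain ⟨x, hx⟩ := hDinf.nonempty
      obtain ⟨i, hiI, hix⟩ := hdiff hx
      exact ⟨i, hiI, hix ▸ hx⟩
    haveI : DecidablePred fun i => i ∈ I ∧ n i ∈ N \ ↑sstar := Classical.decPred _
    let i₁ := Nat.find hDne
    obtain ⟨hi₁I, hi₁D⟩ := Nat.find_spec hDne
    have hrest : N \ ↑(insert (n i₁) sstar) ⊆ (seqQ (i₁+1)).1 := by
      intro x hx
      have hxD : x ∈ N \ ↑sstar := by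
        refine ⟨hx.1, fun hc => hx.2 ?_⟩
        simp only [Finset.coe_insert, Set.mem_insert_iff]
        exact Or.inr hc
      obtain ⟨j, hjI, hjx⟩ := hdiff hxD
      have hij : i₁ ≤ j := by
        by_contra hc
        push_neg at hc
        exact Nat.find_min hDne hc ⟨hjI, hjx ▸ hxD⟩
      rcases eq_or_lt_of_le hij with h | h
      · exfalso; apply hx.2
        simp only [Finset.coe_insert, Set.mem_insert_iff]
        exact Or.inl (by rw [← hjx, h])
      · exact hjx ▸ hnmem i₁ j h
    have := (hspec i₁).2.2.2.2
    rw [show s i₁ = sstar from hi₁I] at this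
    refine this N hN ?_ hrest
    intro x hx
    simp only [Finset.coe_insert, Set.mem_insert_iff] at hx
    rcases hx with h | h
    · exact h ▸ hi₁D.1
    · exact hsN h
  have hWT : n '' I ⊆ T := by
    rintro x ⟨i, _, rfl⟩
    exact (seqQ i).2.1 (hspec i).1
  have hWinf : (n '' I).Infinite := hI.image (Set.injOn_of_injective hninj)
  exact hrej sstar hsstarF (n '' I) hWT hWinf hWacc

/-- Nash–Williams / Galvin–Prikry for open sets. -/
theorem nashWilliams (Bad : Finset ℕ → Prop) (M₀ : Set ℕ) (h : M₀.Infinite) :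
    ∃ M ⊆ M₀, M.Infinite ∧
      ((∀ N ⊆ M, N.Infinite → Enters Bad N) ∨ (∀ s : Finset ℕ, ↑s ⊆ M → ¬ Bad s)) := by
  by_cases hR : Rejects Bad ∅ M₀
  case neg =>
    obtain ⟨M', hM1, hM2, hM3⟩ := exists_accepts_of_not_rejects hR
    refine ⟨M', hM1, hM2, Or.inl fun N hN hNi => hM3 N hNi (by simp) (by simpa using hN)⟩
  case pos =>
    -- fusion
    let R := {p : Finset ℕ × Set ℕ // p.2.Infinite ∧ (∀ x ∈ p.1, ∀ y ∈ p.2, x < y) ∧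
      (∀ s ⊆ p.1, Rejects Bad s p.2) ∧ p.2 ⊆ M₀ ∧ ↑p.1 ⊆ M₀}
    have stepR : ∀ p : R, ∃ q : R, (∃ n ∈ p.1.2, q.1.1 = insert n p.1.1) ∧ q.1.2 ⊆ p.1.2 := by
      rintro ⟨⟨F, T⟩, hTi, hlt, hrej, hTM, hFM⟩
      obtain ⟨n, hnT, T', hT'T, hT'i, hT'lt, hT'rej⟩ := step_lemma F T hTi hrej
      refine ⟨⟨⟨insert n F, T'⟩, hT'i, ?_, ?_, hT'T.trans hTM, ?_⟩, ⟨n, hnT, rfl⟩, hT'T⟩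
      · intro x hx y hy
        rcases Finset.mem_insert.mp hx with h | h
        · exact h ▸ hT'lt y hy
        · exact hlt x h y (hT'T hy)
      · intro s hs
        by_cases hn : n ∈ s
        · have hrw : s = insert n (s.erase n) := (Finset.insert_erase hn).symm
          rw [hrw]
          refine hT'rej (s.erase n) ?_
          intro x hx
          have hxs : x ∈ s := Finset.mem_of_mem_erase hx
          rcases Finset.mem_insert.mp (hs hxs) with h | h
          · exact absurd h (Finset.ne_of_mem_erase hx)
          · exact h
        · have hsF : s ⊆ F := fun x hx => by
            rcases Finset.mem_insert.mp (hs hx) with h | h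
            · exact absurd (h ▸ hx) hn
            · exact h
          exact (hrej s hsF).mono hT'T
      · intro x hx
        simp only [Finset.coe_insert, Set.mem_insert_iff] at hx
        rcases hx with h | h
        · exact h ▸ hTM hnT
        · exact hFM h
    let step : R → R := fun p => (stepR p).choose
    let seqR : ℕ → R := fun k => Nat.rec ⟨⟨∅, M₀⟩, h, by simp, fun s hs => by
      simp only [Finset.subset_empty] at hs; exact hs ▸ hR, le_refl M₀, by simp⟩
      (fun _ ih => step ih) k
    have hseq : ∀ k, seqR (k+1) = step (seqR k) := fun k => rfl
    have hstepspec : ∀ k, (∃ n ∈ (seqR k).1.2, (seqR (k+1)).1.1 = insert n (seqR k).1.1) ∧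
        (seqR (k+1)).1.2 ⊆ (seqR k).1.2 := fun k => (stepR (seqR k)).choose_spec
    have hFmono : ∀ k l, k ≤ l → (seqR k).1.1 ⊆ (seqR l).1.1 := by
      intro k l hkl
      induction l with
      | zero => simp_all
      | succ m ih =>
        rcases Nat.lt_or_ge k (m+1) with hc | hc
        · obtain ⟨⟨nn, _, heq⟩, _⟩ := hstepspec m
          rw [heq]
          exact (ih (Nat.lt_succ_iff.mp hc)).trans (Finset.subset_insert _ _)
        · have : k = m + 1 := le_antisymm hkl hc
          subst this; exact subset_rfl
    set Ninf : Set ℕ := {x | ∃ k, x ∈ (seqR k).1.1} with hNdef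
    have hNM₀ : Ninf ⊆ M₀ := by
      rintro x ⟨k, hk⟩
      exact (seqR k).2.2.2.2.2 hk
    have hNinf : Ninf.Infinite := by
      -- card of F_k grows
      have hcard : ∀ k, k ≤ (seqR k).1.1.card := by
        intro k
        induction k with
        | zero => simp
        | succ m ih =>
          obtain ⟨⟨nn, hnn, heq⟩, _⟩ := hstepspec m
          rw [heq]
          have hnotin : nn ∉ (seqR m).1.1 := by
            intro hc
            exact absurd ((seqR m).2.2.1 nn hc nn hnn) (lt_irrefl _)
          rw [Finset.card_insert_of_notMem hnotin]
          omega
      intro hfin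
      obtain ⟨t, ht⟩ := hfin.exists_finset_coe
      have : ∀ k, (seqR k).1.1 ⊆ t := by
        intro k x hx
        have : x ∈ Ninf := ⟨k, hx⟩
        rw [← ht] at this
        exact_mod_cast this
      have h1 := hcard (t.card + 1)
      have h2 := Finset.card_le_card (this (t.card + 1))
      omega
    refine ⟨Ninf, hNM₀, hNinf, Or.inr ?_⟩
    intro s hs hbad
    -- s ⊆ F_K for some K
    have hsK : ∀ u : Finset ℕ, ↑u ⊆ Ninf → ∃ K, u ⊆ (seqR K).1.1 := by
      classical
      intro u
      induction u using Finset.induction with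
      | empty => exact fun _ => ⟨0, by simp⟩
      | @insert a t ha ih =>
        intro hu
        obtain ⟨K₁, hK₁⟩ := ih (fun x hx => hu (by simp [hx]))
        obtain ⟨K₂, hK₂⟩ := hu (by simp : a ∈ (↑(insert a t) : Set ℕ))
        refine ⟨max K₁ K₂, ?_⟩
        intro x hx
        rcases Finset.mem_insert.mp hx with h | h
        · exact h ▸ hFmono K₂ _ (le_max_right _ _) hK₂
        · exact hFmono K₁ _ (le_max_left _ _) (hK₁ h)
    obtain ⟨K, hK⟩ := hsK s hs
    have hrejs := (seqR K).2.2.2.1 s hK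
    have hacc : Accepts Bad s (seqR K).1.2 :=
      accepts_of_bad hbad (fun y hy x hx => (seqR K).2.2.1 y (hK hy) x hx)
    exact hrejs (seqR K).1.2 (le_refl _) (seqR K).2.1 hacc

end Stmt8NW


namespace Stmt8Work

open Stmt8NW


/-- The shift of a configuration. -/
def shiftz (z : ℤ → Bool) (t : ℤ) : ℤ → Bool := fun i => z (i + t)

lemma continuous_shiftz (t : ℤ) : Continuous (fun z : ℤ → Bool => shiftz z t) :=
  continuous_pi fun i => continuous_apply (i + t)

/-- Independence of the pair `(A,B)` along the set `E` of shifts, with configurations in `X`. -/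
def PairIndep (X A B : Set (ℤ → Bool)) (E : Set ℤ) : Prop :=
  ∀ P M : Finset ℤ, ↑P ⊆ E → ↑M ⊆ E → Disjoint P M →
    ∃ z ∈ X, (∀ t ∈ P, shiftz z t ∈ A) ∧ (∀ t ∈ M, shiftz z t ∈ B)

lemma PairIndep.mono_set {X A B : Set (ℤ → Bool)} {E E' : Set ℤ} (h : PairIndep X A B E)
    (hE : E' ⊆ E) : PairIndep X A B E' :=
  fun P M hP hM hd => h P M (hP.trans hE) (hM.trans hE) hd

lemma PairIndep.symm {X A B : Set (ℤ → Bool)} {E : Set ℤ} (h : PairIndep X A B E) :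
    PairIndep X B A E := by
  intro P M hP hM hd
  obtain ⟨z, hz, h1, h2⟩ := h M P hM hP hd.symm
  exact ⟨z, hz, h2, h1⟩

/-- Number of elements of `M` below `x`. -/
noncomputable def npos (M : Set ℕ) (x : ℕ) : ℕ := (M ∩ Set.Iio x).ncard

lemma npos_enum {M : Set ℕ} {f : ℕ → ℕ} (hmono : StrictMono f) (hrange : M = Set.range f)
    (j : ℕ) : npos M (f j) = j := by
  have himg : M ∩ Set.Iio (f j) = f '' Set.Iio j := by
    ext x
    constructor
    · rintro ⟨hxM, hxlt⟩
      rw [hrange] at hxM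
      obtain ⟨i, rfl⟩ := hxM
      exact ⟨i, hmono.lt_iff_lt.mp hxlt, rfl⟩
    · rintro ⟨i, hi, rfl⟩
      exact ⟨hrange ▸ Set.mem_range_self i, hmono hi⟩
  rw [npos, himg, Set.ncard_image_of_injective _ hmono.injective]
  rw [show (Set.Iio j : Set ℕ) = ↑(Finset.range j) by simp [Finset.coe_range]]
  rw [Set.ncard_coe_finset, Finset.card_range]

lemma initseg_filter {N : Set ℕ} {s : Finset ℕ} (hsN : ↑s ⊆ N)
    (hinit : ∀ x ∈ N, x ∉ s → ∀ y ∈ s, y < x) {x : ℕ} (hx : x ∈ s) :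
    ((s.filter (· < x)).card) = npos N x := by
  have hset : N ∩ Set.Iio x = ↑(s.filter (· < x)) := by
    ext y
    simp only [Finset.coe_filter, Set.mem_setOf_eq, Set.mem_inter_iff, Set.mem_Iio]
    constructor
    · rintro ⟨hyN, hylt⟩
      refine ⟨?_, hylt⟩
      by_contra hys
      exact absurd (hinit y hyN hys x hx) (by omega)
    · rintro ⟨hys, hylt⟩
      exact ⟨hsN hys, hylt⟩
  rw [npos, hset, Set.ncard_coe_finset]

/-- Compactness: a full realizer of the infinite alternating system along an infinite `M`. -/
lemma exists_full_realizer {X : Set (ℤ → Bool)} (hXcomp : IsCompact X)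
    {A B : Set (ℤ → Bool)} (hA : IsClosed A) (hB : IsClosed B)
    {E : Set ℤ} {ε : ℕ → ℤ} (hεinj : Function.Injective ε) (hεE : Set.range ε ⊆ E)
    (hind : PairIndep X A B E) (M : Set ℕ) (hM : M.Infinite) :
    ∃ z ∈ X, ∀ x ∈ M, shiftz z (ε x) ∈ (if Even (npos M x) then A else B) := by
  classical
  have hXne : X.Nonempty := by
    obtain ⟨z, hz, -, -⟩ := hind ∅ ∅ (by simp) (by simp) (by simp)
    exact ⟨z, hz⟩
  have hXclosed : IsClosed X := hXcomp.isClosed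
  set G : Finset ℕ → Set (ℤ → Bool) := fun u =>
    X ∩ ⋂ x ∈ u.filter (· ∈ M), (fun z => shiftz z (ε x)) ⁻¹'
      (if Even (npos M x) then A else B) with hGdef
  have hGclosed : ∀ u, IsClosed (G u) := by
    intro u
    refine hXclosed.inter (isClosed_biInter fun x _ => ?_)
    exact IsClosed.preimage (continuous_shiftz (ε x)) (by split <;> assumption)
  have hGcomp : ∀ u, IsCompact (G u) := fun u =>
    hXcomp.of_isClosed_subset (hGclosed u) Set.inter_subset_left
  have hGne : ∀ u, (G u).Nonempty := by
    intro u
    set P : Finset ℤ := (u.filter (fun x => x ∈ M ∧ Even (npos M x))).image ε with hP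
    set Q : Finset ℤ := (u.filter (fun x => x ∈ M ∧ ¬ Even (npos M x))).image ε with hQ
    have hPE : ↑P ⊆ E := by
      intro t ht
      simp only [hP, Finset.coe_image, Set.mem_image] at ht
      obtain ⟨x, -, rfl⟩ := ht
      exact hεE (Set.mem_range_self x)
    have hQE : ↑Q ⊆ E := by
      intro t ht
      simp only [hQ, Finset.coe_image, Set.mem_image] at ht
      obtain ⟨x, -, rfl⟩ := ht
      exact hεE (Set.mem_range_self x)
    have hdisj : Disjoint P Q := by
      rw [hP, hQ, Finset.disjoint_image hεinj]
      simp only [Finset.disjoint_filter]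
      tauto
    obtain ⟨z, hz, h1, h2⟩ := hind P Q hPE hQE hdisj
    refine ⟨z, hz, ?_⟩
    simp only [Set.mem_iInter]
    intro x hx
    rw [Finset.mem_filter] at hx
    by_cases hpar : Even (npos M x)
    · have : shiftz z (ε x) ∈ A := h1 (ε x) (by
        simp only [hP, Finset.mem_image]
        exact ⟨x, by simp only [Finset.mem_filter]; exact ⟨hx.1, hx.2, hpar⟩, rfl⟩)
      rwa [if_pos hpar]
    · have : shiftz z (ε x) ∈ B := h2 (ε x) (by
        simp only [hQ, Finset.mem_image]
        exact ⟨x, by simp only [Finset.mem_filter]; exact ⟨hx.1, hx.2, hpar⟩, rfl⟩)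
      rwa [if_neg hpar]
  have hdir : Directed (fun x1 x2 : Set (ℤ → Bool) => x1 ⊇ x2) G := by
    intro u v
    refine ⟨u ∪ v, ?_, ?_⟩
    · intro z hz
      refine ⟨hz.1, ?_⟩
      simp only [Set.mem_iInter]
      intro x hx
      have : x ∈ (u ∪ v).filter (· ∈ M) := by
        rw [Finset.mem_filter] at hx ⊢
        exact ⟨Finset.mem_union_left _ hx.1, hx.2⟩
      exact Set.mem_iInter₂.mp hz.2 x this
    · intro z hz
      refine ⟨hz.1, ?_⟩
      simp only [Set.mem_iInter]
      intro x hx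
      have : x ∈ (u ∪ v).filter (· ∈ M) := by
        rw [Finset.mem_filter] at hx ⊢
        exact ⟨Finset.mem_union_right _ hx.1, hx.2⟩
      exact Set.mem_iInter₂.mp hz.2 x this
  obtain ⟨z, hz⟩ := IsCompact.nonempty_iInter_of_directed_nonempty_isCompact_isClosed
    G hdir hGne hGcomp hGclosed
  have hzX : z ∈ X := (Set.mem_iInter.mp hz ∅).1
  refine ⟨z, hzX, ?_⟩
  intro x hxM
  have := (Set.mem_iInter.mp hz {x}).2
  simp only [Set.mem_iInter] at this
  exact this x (by simp [Finset.mem_filter, hxM])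


/-- From realizability of all alternating finite systems inside `M`, get pair-independence
of `(C,B)` along an infinite set of shifts. -/
lemma pairIndep_of_no_bad
    {X C B : Set (ℤ → Bool)} {E : Set ℤ} {ε : ℕ → ℤ}
    (hεinj : Function.Injective ε) (hεE : Set.range ε ⊆ E)
    {M : Set ℕ} (hM : M.Infinite)
    (hgood : ∀ s : Finset ℕ, ↑s ⊆ M →
       ∃ z ∈ X, ∀ x ∈ s, shiftz z (ε x) ∈ (if Even ((s.filter (· < x)).card) then C else B)) :
    ∃ E' ⊆ E, E'.Infinite ∧ PairIndep X C B E' := by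
  classical
  have hMset : {x | x ∈ M}.Infinite := hM
  set w : ℕ → ℕ := Nat.nth (· ∈ M) with hw
  have hwmono : StrictMono w := Nat.nth_strictMono hMset
  have hwM : ∀ k, w k ∈ M := Nat.nth_mem_of_infinite hMset
  set η : ℕ → ℤ := fun k => ε (w (3*k+1)) with hη
  have hηinj : Function.Injective η := by
    intro a b hab
    have h1 := hεinj hab
    have h2 := hwmono.injective h1
    omega
  refine ⟨Set.range η, ?_, Set.infinite_range_of_injective hηinj, ?_⟩
  · rintro t ⟨k, rfl⟩; exact hεE (Set.mem_range_self _)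
  intro P Q hP hQ hdisj
  set KP : Finset ℕ := P.preimage η (Set.injOn_of_injective hηinj) with hKP
  set KQ : Finset ℕ := Q.preimage η (Set.injOn_of_injective hηinj) with hKQ
  have hKPd : Disjoint KP KQ := by
    rw [Finset.disjoint_left]
    intro k h1 h2
    rw [hKP, Finset.mem_preimage] at h1
    rw [hKQ, Finset.mem_preimage] at h2
    exact (Finset.disjoint_left.mp hdisj) h1 h2
  set L : Finset ℕ := KP ∪ KQ with hL
  set block : ℕ → Finset ℕ := fun k => if k ∈ KP then {3*k+1, 3*k+2} else {3*k, 3*k+1}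
    with hblock
  have hblock_sub : ∀ k x, x ∈ block k → 3*k ≤ x ∧ x ≤ 3*k+2 := by
    intro k x hx
    rw [hblock] at hx
    dsimp only at hx
    split at hx <;> simp at hx <;> omega
  have hblock_disj : ∀ k₁ k₂ : ℕ, k₁ ≠ k₂ → Disjoint (block k₁) (block k₂) := by
    intro k₁ k₂ hne
    rw [Finset.disjoint_left]
    intro x h1 h2
    have e1 := hblock_sub k₁ x h1
    have e2 := hblock_sub k₂ x h2
    omega
  have hblock_card : ∀ k, (block k).card = 2 := by
    intro k
    rw [hblock]
    dsimp only
    split <;> exact Finset.card_pair (by omega)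
  set I : Finset ℕ := L.biUnion block with hI
  set s : Finset ℕ := I.image w with hs
  have hsM : ↑s ⊆ M := by
    intro x hx
    simp only [hs, Finset.coe_image, Set.mem_image] at hx
    obtain ⟨m, -, rfl⟩ := hx
    exact hwM m
  have hfiltercard : ∀ j, (s.filter (· < w j)).card = (I.filter (· < j)).card := by
    intro j
    have heq : s.filter (· < w j) = (I.filter (· < j)).image w := by
      ext x
      simp only [hs, Finset.mem_filter, Finset.mem_image]
      constructor
      · rintro ⟨⟨m, hm, rfl⟩, hlt⟩
        exact ⟨m, ⟨hm, hwmono.lt_iff_lt.mp hlt⟩, rfl⟩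
      · rintro ⟨m, ⟨hm, hlt⟩, rfl⟩
        exact ⟨⟨m, hm, rfl⟩, hwmono hlt⟩
    rw [heq, Finset.card_image_of_injective _ hwmono.injective]
  have hpos : ∀ k ∈ L, (I.filter (· < 3*k+1)).card =
      2 * ((L.filter (· < k)).card) + (if k ∈ KQ then 1 else 0) := by
    intro k hkL
    rw [hI, Finset.filter_biUnion]
    rw [Finset.card_biUnion (by
      intro a _ b _ hne
      exact Finset.disjoint_filter_filter (hblock_disj a b hne))]
    rw [← Finset.sum_filter_add_sum_filter_not L (· < k)
      (fun k' => ((block k').filter (· < 3*k+1)).card)]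
    congr 1
    · have hterm : ∀ k' ∈ L.filter (· < k), ((block k').filter (· < 3*k+1)).card = 2 := by
        intro k' hk'
        rw [Finset.mem_filter] at hk'
        rw [Finset.filter_true_of_mem (fun x hx => by
          have := hblock_sub k' x hx
          have : k' < k := hk'.2
          omega)]
        exact hblock_card k'
      rw [Finset.sum_congr rfl hterm, Finset.sum_const, smul_eq_mul, mul_comm]
    · have h0 : ∑ k' ∈ L.filter (fun b => ¬ b < k), ((block k').filter (· < 3*k+1)).card
          = ((block k).filter (· < 3*k+1)).card := by
        apply Finset.sum_eq_single k
        · intro b hb hbk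
          rw [Finset.mem_filter] at hb
          have hblt : k < b := by
            have := hb.2
            omega
          rw [Finset.card_eq_zero, Finset.filter_eq_empty_iff]
          intro x hx
          have := hblock_sub b x hx
          omega
        · intro hk
          exact absurd (Finset.mem_filter.mpr ⟨hkL, by omega⟩) hk
      rw [h0]
      by_cases hkQ : k ∈ KQ
      · have hkP : k ∉ KP := Finset.disjoint_right.mp hKPd hkQ
        rw [if_pos hkQ]
        have hb : block k = {3*k, 3*k+1} := by rw [hblock]; simp [hkP]
        rw [hb]
        have hf : ({3*k, 3*k+1} : Finset ℕ).filter (· < 3*k+1) = {3*k} := by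
          ext x
          simp only [Finset.mem_filter, Finset.mem_insert, Finset.mem_singleton]
          omega
        rw [hf, Finset.card_singleton]
      · have hkP : k ∈ KP := by
          rcases Finset.mem_union.mp hkL with h | h
          · exact h
          · exact absurd h hkQ
        rw [if_neg hkQ]
        have hb : block k = {3*k+1, 3*k+2} := by rw [hblock]; simp [hkP]
        rw [hb]
        have hf : ({3*k+1, 3*k+2} : Finset ℕ).filter (· < 3*k+1) = ∅ := by
          rw [Finset.filter_eq_empty_iff]
          intro x hx
          simp only [Finset.mem_insert, Finset.mem_singleton] at hx
          omega
        rw [hf, Finset.card_empty]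
  obtain ⟨z, hzX, hz⟩ := hgood s hsM
  refine ⟨z, hzX, ?_, ?_⟩
  · intro t ht
    obtain ⟨k, hkKP, rfl⟩ : ∃ k, k ∈ KP ∧ η k = t := by
      obtain ⟨k, rfl⟩ := hP ht
      exact ⟨k, Finset.mem_preimage.mpr ht, rfl⟩
    have hkL : k ∈ L := Finset.mem_union_left _ hkKP
    have hxI : (3*k+1) ∈ I := by
      rw [hI, Finset.mem_biUnion]
      exact ⟨k, hkL, by rw [hblock]; simp [hkKP]⟩
    have hxs : w (3*k+1) ∈ s := by
      rw [hs, Finset.mem_image]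
      exact ⟨3*k+1, hxI, rfl⟩
    have := hz (w (3*k+1)) hxs
    rw [hfiltercard, hpos k hkL] at this
    have hkQ : k ∉ KQ := Finset.disjoint_left.mp hKPd hkKP
    rw [if_neg hkQ] at this
    rw [if_pos (by exact ⟨(L.filter (· < k)).card, by ring⟩)] at this
    exact this
  · intro t ht
    obtain ⟨k, hkKQ, rfl⟩ : ∃ k, k ∈ KQ ∧ η k = t := by
      obtain ⟨k, rfl⟩ := hQ ht
      exact ⟨k, Finset.mem_preimage.mpr ht, rfl⟩
    have hkL : k ∈ L := Finset.mem_union_right _ hkKQ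
    have hkP : k ∉ KP := Finset.disjoint_right.mp hKPd hkKQ
    have hxI : (3*k+1) ∈ I := by
      rw [hI, Finset.mem_biUnion]
      exact ⟨k, hkL, by rw [hblock]; simp [hkP]⟩
    have hxs : w (3*k+1) ∈ s := by
      rw [hs, Finset.mem_image]
      exact ⟨3*k+1, hxI, rfl⟩
    have := hz (w (3*k+1)) hxs
    rw [hfiltercard, hpos k hkL] at this
    rw [if_pos hkKQ] at this
    rw [if_neg (by
      rintro ⟨r, hr⟩
      omega)] at this
    exact this


/-- The two-sided entering situation is contradictory. -/
lemma no_double_hornA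
    {X A' A'' B : Set (ℤ → Bool)} (hXcomp : IsCompact X)
    (hA' : IsClosed A') (hA'' : IsClosed A'') (hB : IsClosed B)
    {E : Set ℤ} {ε : ℕ → ℤ} (hεinj : Function.Injective ε) (hεE : Set.range ε ⊆ E)
    (hind : PairIndep X (A' ∪ A'') B E)
    {M₂ : Set ℕ} (hM₂ : M₂.Infinite)
    (h1 : ∀ N ⊆ M₂, N.Infinite → ∃ s : Finset ℕ, ↑s ⊆ N ∧
        (∀ x ∈ N, x ∉ s → ∀ y ∈ s, y < x) ∧
        ¬ ∃ z ∈ X, ∀ x ∈ s, shiftz z (ε x) ∈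
          (if Even ((s.filter (· < x)).card) then A' else B))
    (h2 : ∀ N ⊆ M₂, N.Infinite → ∃ s : Finset ℕ, ↑s ⊆ N ∧
        (∀ x ∈ N, x ∉ s → ∀ y ∈ s, y < x) ∧
        ¬ ∃ z ∈ X, ∀ x ∈ s, shiftz z (ε x) ∈
          (if Even ((s.filter (· < x)).card) then A'' else B)) : False := by
  classical
  obtain ⟨z, hzX, hz⟩ := exists_full_realizer hXcomp (hA'.union hA'') hB hεinj hεE hind M₂ hM₂
  have hM₂set : {x | x ∈ M₂}.Infinite := hM₂
  set u : ℕ → ℕ := Nat.nth (· ∈ M₂) with hu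
  have humono : StrictMono u := Nat.nth_strictMono hM₂set
  have huM : ∀ k, u k ∈ M₂ := Nat.nth_mem_of_infinite hM₂set
  have hurange : M₂ = Set.range u := (Nat.range_nth_of_infinite hM₂set).symm
  have hz' : ∀ j, shiftz z (ε (u j)) ∈ (if Even j then A' ∪ A'' else B) := by
    intro j
    have := hz (u j) (huM j)
    rwa [npos_enum humono hurange j] at this
  have core : ∀ A₀ : Set (ℤ → Bool),
      (∀ N ⊆ M₂, N.Infinite → ∃ s : Finset ℕ, ↑s ⊆ N ∧
        (∀ x ∈ N, x ∉ s → ∀ y ∈ s, y < x) ∧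
        ¬ ∃ z' ∈ X, ∀ x ∈ s, shiftz z' (ε x) ∈
          (if Even ((s.filter (· < x)).card) then A₀ else B)) →
      ∀ J : Set ℕ, J.Infinite → (∀ j ∈ J, shiftz z (ε (2*j |> u)) ∈ A₀) → False := by
    intro A₀ hhorn J hJ hJmem
    have hJset : {x | x ∈ J}.Infinite := hJ
    set o : ℕ → ℕ := Nat.nth (· ∈ J) with ho
    have homono : StrictMono o := Nat.nth_strictMono hJset
    have hoJ : ∀ k, o k ∈ J := Nat.nth_mem_of_infinite hJset
    set v : ℕ → ℕ := fun m => if Even m then u (2 * o (m/2)) else u (2 * o (m/2) + 1) with hv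
    have hvmono : StrictMono v := by
      apply strictMono_nat_of_lt_succ
      intro m
      rcases Nat.even_or_odd m with he | hodd
      · have hno : ¬ Even (m+1) := by
          rcases he with ⟨r, hr⟩
          rintro ⟨q, hq⟩
          omega
        have hdiv : (m+1)/2 = m/2 := by
          rcases he with ⟨r, hr⟩
          omega
        rw [hv]
        dsimp only
        rw [if_pos he, if_neg hno, hdiv]
        exact humono (by omega)
      · have hne : ¬ Even m := Nat.not_even_iff_odd.mpr hodd
        have hye : Even (m+1) := by
          rcases hodd with ⟨r, hr⟩
          exact ⟨r+1, by omega⟩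
        have hdiv : (m+1)/2 = m/2 + 1 := by
          rcases hodd with ⟨r, hr⟩
          omega
        rw [hv]
        dsimp only
        rw [if_neg hne, if_pos hye, hdiv]
        have := homono (show m/2 < m/2 + 1 by omega)
        exact humono (by omega)
    set N : Set ℕ := Set.range v with hN
    have hNM₂ : N ⊆ M₂ := by
      rintro x ⟨m, rfl⟩
      rw [hv]
      dsimp only
      split <;> exact huM _
    have hNinf : N.Infinite := Set.infinite_range_of_injective hvmono.injective
    obtain ⟨s, hsN, hinit, hbad⟩ := hhorn N hNM₂ hNinf
    apply hbad
    refine ⟨z, hzX, ?_⟩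
    intro x hx
    obtain ⟨m, rfl⟩ := hsN hx
    rw [initseg_filter hsN hinit hx, npos_enum hvmono rfl m]
    rcases Nat.even_or_odd m with he | hodd
    · rw [if_pos he]
      have hvm : v m = u (2 * o (m/2)) := by
        rw [hv]; dsimp only; rw [if_pos he]
      rw [hvm]
      exact hJmem (o (m/2)) (hoJ _)
    · have hne : ¬ Even m := Nat.not_even_iff_odd.mpr hodd
      rw [if_neg hne]
      have hvm : v m = u (2 * o (m/2) + 1) := by
        rw [hv]; dsimp only; rw [if_neg hne]
      rw [hvm]
      have := hz' (2 * o (m/2) + 1)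
      rwa [if_neg (by rintro ⟨r, hr⟩; omega)] at this
  set J : Set ℕ := {j | shiftz z (ε (u (2*j))) ∈ A'} with hJdef
  by_cases hJinf : J.Infinite
  · exact core A' h1 J hJinf (fun j hj => hj)
  · have hJc : (Jᶜ).Infinite := (Set.not_infinite.mp hJinf).infinite_compl
    apply core A'' h2 Jᶜ hJc
    intro j hj
    have hmem := hz' (2*j)
    rw [if_pos ⟨j, by omega⟩] at hmem
    rcases hmem with h | h
    · exact absurd h hj
    · exact h


/-- The splitting lemma: independence of `(A' ∪ A'', B)` passes to one of the halves
along an infinite subset. -/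
theorem pairIndep_split
    {X A' A'' B : Set (ℤ → Bool)} (hXcomp : IsCompact X)
    (hA' : IsClosed A') (hA'' : IsClosed A'') (hB : IsClosed B)
    {E : Set ℤ} (hE : E.Infinite)
    (hind : PairIndep X (A' ∪ A'') B E) :
    ∃ E' ⊆ E, E'.Infinite ∧ (PairIndep X A' B E' ∨ PairIndep X A'' B E') := by
  classical
  set ε : ℕ → ℤ := fun n => ((Set.Infinite.natEmbedding E hE n : ↥E) : ℤ) with hε
  have hεinj : Function.Injective ε := by
    intro a b hab
    exact (Set.Infinite.natEmbedding E hE).injective (Subtype.val_injective hab)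
  have hεE : Set.range ε ⊆ E := by
    rintro t ⟨n, rfl⟩
    exact (Set.Infinite.natEmbedding E hE n).2
  set Bad1 : Finset ℕ → Prop := fun s => ¬ ∃ z ∈ X, ∀ x ∈ s, shiftz z (ε x) ∈
    (if Even ((s.filter (· < x)).card) then A' else B) with hBad1
  set Bad2 : Finset ℕ → Prop := fun s => ¬ ∃ z ∈ X, ∀ x ∈ s, shiftz z (ε x) ∈
    (if Even ((s.filter (· < x)).card) then A'' else B) with hBad2
  obtain ⟨M₁, hM₁u, hM₁inf, hhorn1⟩ := Stmt8NW.nashWilliams Bad1 Set.univ Set.infinite_univ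
  rcases hhorn1 with hA1 | hgood1
  · obtain ⟨M₂, hM₂sub, hM₂inf, hhorn2⟩ := Stmt8NW.nashWilliams Bad2 M₁ hM₁inf
    rcases hhorn2 with hA2 | hgood2
    · exfalso
      refine no_double_hornA hXcomp hA' hA'' hB hεinj hεE hind hM₂inf ?_ ?_
      · intro N hN hNinf
        obtain ⟨s, h1, h2, h3⟩ := hA1 N (hN.trans hM₂sub) hNinf
        exact ⟨s, h1, h2, h3⟩
      · intro N hN hNinf
        obtain ⟨s, h1, h2, h3⟩ := hA2 N hN hNinf
        exact ⟨s, h1, h2, h3⟩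
    · obtain ⟨E', hE'sub, hE'inf, hpi⟩ := pairIndep_of_no_bad hεinj hεE hM₂inf
        (fun s hs => not_not.mp (hgood2 s hs))
      exact ⟨E', hE'sub, hE'inf, Or.inr hpi⟩
  · obtain ⟨E', hE'sub, hE'inf, hpi⟩ := pairIndep_of_no_bad hεinj hεE hM₁inf
      (fun s hs => not_not.mp (hgood1 s hs))
    exact ⟨E', hE'sub, hE'inf, Or.inl hpi⟩

/-- Iterated splitting over a finite closed decomposition. -/
theorem pairIndep_decompose
    {X B : Set (ℤ → Bool)} (hXcomp : IsCompact X) (hB : IsClosed B)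
    {ι : Type*} [DecidableEq ι] (T : Finset ι) (As : ι → Set (ℤ → Bool))
    (hclosed : ∀ i ∈ T, IsClosed (As i))
    {E : Set ℤ} (hE : E.Infinite)
    (hind : PairIndep X (⋃ i ∈ T, As i) B E) :
    ∃ i ∈ T, ∃ E' ⊆ E, E'.Infinite ∧ PairIndep X (As i) B E' := by
  classical
  induction T using Finset.induction generalizing E with
  | empty =>
    exfalso
    obtain ⟨t, ht⟩ := hE.nonempty
    obtain ⟨z, hz, h1, h2⟩ := hind {t} ∅ (by simpa using ht) (by simp) (by simp)
    have := h1 t (Finset.mem_singleton_self t)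
    simpa using this
  | @insert i T hiT ih =>
    have hdecomp : (⋃ j ∈ insert i T, As j) = As i ∪ (⋃ j ∈ T, As j) := by
      simp [Set.biUnion_insert]
    rw [hdecomp] at hind
    have hTclosed : IsClosed (⋃ j ∈ T, As j) :=
      Set.Finite.isClosed_biUnion T.finite_toSet
        (fun j hj => hclosed j (Finset.mem_insert_of_mem hj))
    obtain ⟨E', hE'sub, hE'inf, hsplit⟩ := pairIndep_split hXcomp
      (hclosed i (Finset.mem_insert_self i T)) hTclosed hB hE hind
    rcases hsplit with h | h
    · exact ⟨i, Finset.mem_insert_self i T, E', hE'sub, hE'inf, h⟩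
    · obtain ⟨j, hj, E'', hsub, hinf, hpi⟩ :=
        ih (fun j hj => hclosed j (Finset.mem_insert_of_mem hj)) hE'inf h
      exact ⟨j, Finset.mem_insert_of_mem hj, E'', hsub.trans hE'sub, hinf, hpi⟩


end Stmt8Work

open Stmt8Work in
theorem stmt8 (X : Set (ℤ → Bool)) (hXclosed : IsClosed X)
    (hXinv : ∀ m : ℤ, ∀ ω ∈ X, (fun i => ω (i + m)) ∈ X) :
    -- `X` is not tame ↔
    (∃ f : X → ℝ, Continuous f ∧ ∃ m : ℕ → ℤ,
        IsIndependentSeq fun n (x : X) =>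
          f ⟨fun i => (x : ℤ → Bool) (i + m n), hXinv (m n) x x.2⟩) ↔
    -- there is an infinite `A ⊆ ℤ` on which `X` is free, i.e. `{x|_A : x ∈ X} = {0,1}^A`
    (∃ A : Set ℤ, A.Infinite ∧ ∀ φ : A → Bool, ∃ x ∈ X, ∀ a : A, x a = φ a) := by
  classical
  constructor
  · rintro ⟨f, hf, m, a, b, hab, hPM⟩
    have hXcomp : IsCompact X := hXclosed.isCompact
    haveI hXcs : CompactSpace ↥X := isCompact_iff_compactSpace.mp hXcomp
    set Aset : Set (ℤ → Bool) := Subtype.val '' {x : ↥X | f x ≤ a} with hAdef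
    set Bset : Set (ℤ → Bool) := Subtype.val '' {x : ↥X | b ≤ f x} with hBdef
    have hAcomp : IsCompact Aset :=
      ((isClosed_le hf continuous_const).isCompact).image continuous_subtype_val
    have hBcomp : IsCompact Bset :=
      ((isClosed_le continuous_const hf).isCompact).image continuous_subtype_val
    have hAclosed : IsClosed Aset := hAcomp.isClosed
    have hBclosed : IsClosed Bset := hBcomp.isClosed
    have hABdisj : ∀ z, z ∈ Aset → z ∈ Bset → False := by
      rintro z ⟨x₁, hx₁, rfl⟩ ⟨x₂, hx₂, hval⟩
      have : x₂ = x₁ := Subtype.val_injective hval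
      subst this
      simp only [Set.mem_setOf_eq] at hx₁ hx₂
      linarith
    -- m is injective
    have hminj : Function.Injective m := by
      intro n₁ n₂ he
      by_contra hne
      have hd : Disjoint ({n₁} : Finset ℕ) {n₂} := by
        rw [Finset.disjoint_singleton]
        exact hne
      obtain ⟨x, hx⟩ := hPM {n₁} {n₂} hd
      obtain ⟨hx1, hx2⟩ := hx
      simp only [Set.mem_iInter, Finset.mem_singleton, Set.mem_setOf_eq] at hx1 hx2
      have h1 := hx1 n₁ rfl
      have h2 := hx2 n₂ rfl
      have heq : (⟨fun i => (x : ℤ → Bool) (i + m n₁), hXinv (m n₁) x x.2⟩ : ↥X) =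
          ⟨fun i => (x : ℤ → Bool) (i + m n₂), hXinv (m n₂) x x.2⟩ := by
        apply Subtype.ext
        funext i
        simp only [he]
      rw [heq] at h1
      linarith
    set E : Set ℤ := Set.range m with hE
    have hEinf : E.Infinite := Set.infinite_range_of_injective hminj
    -- pair independence
    have hpair : PairIndep X Aset Bset E := by
      intro P M hP hM hdisj
      set P' : Finset ℕ := P.preimage m (Set.injOn_of_injective hminj) with hP'
      set M' : Finset ℕ := M.preimage m (Set.injOn_of_injective hminj) with hM'
      have hd' : Disjoint P' M' := by
        rw [Finset.disjoint_left]
        intro k h1 h2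
        rw [hP', Finset.mem_preimage] at h1
        rw [hM', Finset.mem_preimage] at h2
        exact (Finset.disjoint_left.mp hdisj) h1 h2
      obtain ⟨x, hx1, hx2⟩ := hPM P' M' hd'
      simp only [Set.mem_iInter, Set.mem_setOf_eq] at hx1 hx2
      refine ⟨↑x, x.2, ?_, ?_⟩
      · intro t ht
        obtain ⟨n, rfl⟩ := hP ht
        have hn : n ∈ P' := by rw [hP', Finset.mem_preimage]; exact ht
        exact ⟨⟨shiftz (↑x) (m n), hXinv (m n) ↑x x.2⟩, le_of_lt (hx1 n hn), rfl⟩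
      · intro t ht
        obtain ⟨n, rfl⟩ := hM ht
        have hn : n ∈ M' := by rw [hM', Finset.mem_preimage]; exact ht
        exact ⟨⟨shiftz (↑x) (m n), hXinv (m n) ↑x x.2⟩, le_of_lt (hx2 n hn), rfl⟩
    -- separation window
    obtain ⟨W, hW⟩ : ∃ W : ℕ, ∀ zA ∈ Aset, ∀ zB ∈ Bset,
        ∃ i ∈ Finset.Icc (-(W:ℤ)) (W:ℤ), zA i ≠ zB i := by
      by_contra hcon
      push_neg at hcon
      set F : ℕ → Set ((ℤ → Bool) × (ℤ → Bool)) := fun W =>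
        {p | p.1 ∈ Aset ∧ p.2 ∈ Bset ∧ ∀ i ∈ Finset.Icc (-(W:ℤ)) (W:ℤ), p.1 i = p.2 i}
        with hF
      have hFclosed : ∀ W, IsClosed (F W) := by
        intro W
        have hrw : F W = (Prod.fst ⁻¹' Aset) ∩ ((Prod.snd ⁻¹' Bset) ∩
            ⋂ i ∈ Finset.Icc (-(W:ℤ)) (W:ℤ),
              {p : (ℤ → Bool) × (ℤ → Bool) | p.1 i = p.2 i}) := by
          ext p
          simp only [hF, Set.mem_setOf_eq, Set.mem_inter_iff, Set.mem_preimage,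
            Set.mem_iInter]
        rw [hrw]
        refine (hAclosed.preimage continuous_fst).inter
          ((hBclosed.preimage continuous_snd).inter (isClosed_biInter fun i _ => ?_))
        exact isClosed_eq ((continuous_apply i).comp continuous_fst)
          ((continuous_apply i).comp continuous_snd)
      have hFcomp : ∀ W, IsCompact (F W) := by
        intro W
        apply IsCompact.of_isClosed_subset (hAcomp.prod hBcomp) (hFclosed W)
        intro p hp
        exact ⟨hp.1, hp.2.1⟩
      have hFne : ∀ W, (F W).Nonempty := by
        intro W
        obtain ⟨zA, hzA, zB, hzB, hagree⟩ := hcon W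
        exact ⟨(zA, zB), hzA, hzB, hagree⟩
      have hFdir : Directed (fun s t : Set ((ℤ → Bool) × (ℤ → Bool)) => s ⊇ t) F := by
        intro W W'
        refine ⟨max W W', ?_, ?_⟩ <;>
        · rintro p ⟨h1, h2, h3⟩
          refine ⟨h1, h2, fun i hi => h3 i ?_⟩
          rw [Finset.mem_Icc] at hi ⊢
          have h6 : (W:ℤ) ≤ ((W ⊔ W' : ℕ) : ℤ) := by exact_mod_cast le_max_left W W'
          have h7 : (W':ℤ) ≤ ((W ⊔ W' : ℕ) : ℤ) := by exact_mod_cast le_max_right W W'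
          omega
      obtain ⟨p, hp⟩ := IsCompact.nonempty_iInter_of_directed_nonempty_isCompact_isClosed
        F hFdir hFne hFcomp hFclosed
      have hpall : ∀ W : ℕ, p ∈ F W := Set.mem_iInter.mp hp
      have hpeq : p.1 = p.2 := by
        funext i
        have := (hpall i.natAbs).2.2 i (by
          rw [Finset.mem_Icc]
          rcases Int.natAbs_eq i with h | h <;> omega)
        exact this
      exact hABdisj p.1 (hpall 0).1 (hpeq ▸ (hpall 0).2.1)
    set G : Finset ℤ := Finset.Icc (-(W:ℤ)) (W:ℤ) with hG
    set cyl : (↥G → Bool) → Set (ℤ → Bool) := fun q => {z | ∀ i : ↥G, z ↑i = q i} with hcyl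
    have hcylclosed : ∀ q, IsClosed (cyl q) := by
      intro q
      have : cyl q = ⋂ i : ↥G, {z : ℤ → Bool | z ↑i = q i} := by
        ext z; simp [hcyl, Set.mem_iInter]
      rw [this]
      exact isClosed_iInter fun i => isClosed_eq (continuous_apply _) continuous_const
    -- decompose A-side
    have hAdecomp : Aset = ⋃ q ∈ (Finset.univ : Finset (↥G → Bool)), (Aset ∩ cyl q) := by
      ext z
      simp only [Set.mem_iUnion, Finset.mem_univ, exists_true_left]
      constructor
      · intro hz
        exact ⟨fun i => z ↑i, ⟨hz, fun i => rfl⟩⟩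
      · rintro ⟨q, hq, -⟩
        exact hq
    obtain ⟨qA, -, E₁, hE₁sub, hE₁inf, hpi1⟩ := pairIndep_decompose hXcomp hBclosed
      (Finset.univ : Finset (↥G → Bool)) (fun q => Aset ∩ cyl q)
      (fun q _ => hAclosed.inter (hcylclosed q)) hEinf (by rw [← hAdecomp]; exact hpair)
    -- decompose B-side
    have hBdecomp : Bset = ⋃ q ∈ (Finset.univ : Finset (↥G → Bool)), (Bset ∩ cyl q) := by
      ext z
      simp only [Set.mem_iUnion, Finset.mem_univ, exists_true_left]
      constructor
      · intro hz
        exact ⟨fun i => z ↑i, ⟨hz, fun i => rfl⟩⟩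
      · rintro ⟨q, hq, -⟩
        exact hq
    obtain ⟨qB, -, E₂, hE₂sub, hE₂inf, hpi2⟩ := pairIndep_decompose hXcomp
      (hAclosed.inter (hcylclosed qA))
      (Finset.univ : Finset (↥G → Bool)) (fun q => Bset ∩ cyl q)
      (fun q _ => hBclosed.inter (hcylclosed q)) hE₁inf (by rw [← hBdecomp]; exact hpi1.symm)
    have hpi : PairIndep X (Aset ∩ cyl qA) (Bset ∩ cyl qB) E₂ := hpi2.symm
    -- the two patterns differ somewhere on G
    obtain ⟨t₀, ht₀⟩ := hE₂inf.nonempty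
    obtain ⟨zA, -, h1A, -⟩ := hpi {t₀} ∅ (by simpa using ht₀) (by simp) (by simp)
    obtain ⟨zB, -, -, h2B⟩ := hpi ∅ {t₀} (by simp) (by simpa using ht₀) (by simp)
    have hzA := h1A t₀ (Finset.mem_singleton_self t₀)
    have hzB := h2B t₀ (Finset.mem_singleton_self t₀)
    obtain ⟨c, hcG, hcne⟩ := hW (shiftz zA t₀) hzA.1 (shiftz zB t₀) hzB.1
    have hqne : qA ⟨c, hcG⟩ ≠ qB ⟨c, hcG⟩ := by
      intro hcon
      apply hcne
      rw [show shiftz zA t₀ c = qA ⟨c, hcG⟩ from hzA.2 ⟨c, hcG⟩,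
        show shiftz zB t₀ c = qB ⟨c, hcG⟩ from hzB.2 ⟨c, hcG⟩, hcon]
    -- the free set
    set Afree : Set ℤ := (fun t => c + t) '' E₂ with hAfree
    have hAfreeinf : Afree.Infinite := hE₂inf.image (Set.injOn_of_injective
      (fun s t h => by omega))
    refine ⟨Afree, hAfreeinf, ?_⟩
    intro φ
    set φ' : ℤ → Bool := fun i => if h : i ∈ Afree then φ ⟨i, h⟩ else false with hφ'
    -- compactness over finite subsets
    set H : Finset ℤ → Set (ℤ → Bool) := fun u =>
      {x | x ∈ X ∧ ∀ t ∈ u, t ∈ E₂ → x (c + t) = φ' (c + t)} with hH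
    have hHclosed : ∀ u, IsClosed (H u) := by
      intro u
      have hrw : H u = X ∩ ⋂ t ∈ u, {x : ℤ → Bool | t ∈ E₂ → x (c + t) = φ' (c + t)} := by
        ext x
        simp only [hH, Set.mem_setOf_eq, Set.mem_inter_iff, Set.mem_iInter]
      rw [hrw]
      refine hXclosed.inter (isClosed_biInter fun t _ => ?_)
      by_cases ht : t ∈ E₂
      · have : {x : ℤ → Bool | t ∈ E₂ → x (c + t) = φ' (c + t)}
            = {x : ℤ → Bool | x (c + t) = φ' (c + t)} := by
          ext x; simp [ht]
        rw [this]
        exact isClosed_eq (continuous_apply _) continuous_const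
      · have : {x : ℤ → Bool | t ∈ E₂ → x (c + t) = φ' (c + t)} = Set.univ := by
          ext x; simp [ht]
        rw [this]
        exact isClosed_univ
    have hHcomp : ∀ u, IsCompact (H u) := fun u =>
      hXcomp.of_isClosed_subset (hHclosed u) (fun x hx => hx.1)
    have hHne : ∀ u, (H u).Nonempty := by
      intro u
      set P : Finset ℤ := u.filter (fun t => t ∈ E₂ ∧ φ' (c + t) = qA ⟨c, hcG⟩) with hPdef
      set M : Finset ℤ := u.filter (fun t => t ∈ E₂ ∧ φ' (c + t) ≠ qA ⟨c, hcG⟩) with hMdef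
      have hPsub : ↑P ⊆ E₂ := by
        intro t ht
        rw [hPdef] at ht
        simp only [Finset.coe_filter, Set.mem_setOf_eq] at ht
        exact ht.2.1
      have hMsub : ↑M ⊆ E₂ := by
        intro t ht
        rw [hMdef] at ht
        simp only [Finset.coe_filter, Set.mem_setOf_eq] at ht
        exact ht.2.1
      have hd : Disjoint P M := by
        rw [Finset.disjoint_left]
        intro t h1 h2
        rw [hPdef, Finset.mem_filter] at h1
        rw [hMdef, Finset.mem_filter] at h2
        exact h2.2.2 h1.2.2
      obtain ⟨z, hzX, hz1, hz2⟩ := hpi P M hPsub hMsub hd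
      refine ⟨z, hzX, ?_⟩
      intro t htu htE₂
      by_cases hv : φ' (c + t) = qA ⟨c, hcG⟩
      · have ht : t ∈ P := by
          rw [hPdef, Finset.mem_filter]
          exact ⟨htu, htE₂, hv⟩
        have := (hz1 t ht).2 ⟨c, hcG⟩
        rw [show shiftz z t ↑(⟨c, hcG⟩ : ↥G) = z (c + t) from rfl] at this
        rw [this, hv]
      · have ht : t ∈ M := by
          rw [hMdef, Finset.mem_filter]
          exact ⟨htu, htE₂, hv⟩
        have := (hz2 t ht).2 ⟨c, hcG⟩
        rw [show shiftz z t ↑(⟨c, hcG⟩ : ↥G) = z (c + t) from rfl] at this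
        rw [this]
        revert hv hqne
        cases φ' (c + t) <;> cases qA ⟨c, hcG⟩ <;> cases qB ⟨c, hcG⟩ <;> simp
    have hHdir : Directed (fun s t : Set (ℤ → Bool) => s ⊇ t) H := by
      intro u v
      refine ⟨u ∪ v, ?_, ?_⟩ <;>
      · rintro x ⟨hx1, hx2⟩
        exact ⟨hx1, fun t ht htE => hx2 t (by simp [Finset.mem_union, ht]) htE⟩
    obtain ⟨x, hx⟩ := IsCompact.nonempty_iInter_of_directed_nonempty_isCompact_isClosed
      H hHdir hHne hHcomp hHclosed
    have hxX : x ∈ X := (Set.mem_iInter.mp hx ∅).1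
    have hxval : ∀ t ∈ E₂, x (c + t) = φ' (c + t) := by
      intro t ht
      exact (Set.mem_iInter.mp hx {t}).2 t (Finset.mem_singleton_self t) ht
    refine ⟨x, hxX, ?_⟩
    rintro ⟨i, hi⟩
    obtain ⟨t, ht, hct⟩ := hi
    subst hct
    have hmem : c + t ∈ Afree := ⟨t, ht, rfl⟩
    have h1 : x (c + t) = φ' (c + t) := hxval t ht
    have h2 : φ' (c + t) = φ ⟨c + t, hmem⟩ := by
      rw [hφ']
      exact dif_pos hmem
    exact h1.trans h2
  · -- easy direction
    rintro ⟨A, hAinf, hfree⟩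
    set e : ℕ → ↥A := fun n => Set.Infinite.natEmbedding A hAinf n with he
    set m : ℕ → ℤ := fun n => ((e n : ↥A) : ℤ) with hm
    have hminj : Function.Injective m := by
      intro a b hab
      exact (Set.Infinite.natEmbedding A hAinf).injective (Subtype.val_injective hab)
    refine ⟨fun x => if (x : ℤ → Bool) 0 then 1 else 0, ?_, m, 1/3, 2/3, by norm_num, ?_⟩
    · have h1 : Continuous fun x : ↥X => (x : ℤ → Bool) 0 :=
        (continuous_apply 0).comp continuous_subtype_val
      exact (continuous_of_discreteTopology (f := fun b : Bool => if b then (1:ℝ) else 0)).comp h1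
    · intro P M hdisj
      set φ : ↥A → Bool := fun a => if (∃ n ∈ M, m n = ↑a) then true else false with hφ
      obtain ⟨x, hxX, hx⟩ := hfree φ
      refine ⟨⟨x, hxX⟩, ?_, ?_⟩
      · rw [Set.mem_iInter₂]
        intro n hn
        rw [Set.mem_setOf_eq]
        have hval : (fun i => x (i + m n)) 0 = x (m n) := by norm_num
        have hxa := hx (e n)
        have hφn : φ (e n) = false := by
          rw [hφ]
          simp only [ite_eq_right_iff]
          intro ⟨k, hk, hmk⟩
          exfalso
          have : k = n := hminj hmk
          subst this
          exact (Finset.disjoint_left.mp hdisj) hn hk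
        have : x (m n) = false := by
          rw [hm] at *
          rw [hxa, hφn]
        simp only [hval, this]
        norm_num
      · rw [Set.mem_iInter₂]
        intro n hn
        rw [Set.mem_setOf_eq]
        have hval : (fun i => x (i + m n)) 0 = x (m n) := by norm_num
        have hxa := hx (e n)
        have hφn : φ (e n) = true := by
          rw [hφ]
          simp only [ite_eq_left_iff]
          intro hc
          exact absurd ⟨n, hn, rfl⟩ hc
        have : x (m n) = true := by
          rw [hm] at *
          rw [hxa, hφn]
        simp only [hval, this]
        norm_num
end
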